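/- arXiv:2507.23594 — 5 statements merged into one kernel-verified Lean document; each statement's English description precedes it below -/
import Mathlib

section
/- For every multi-index m = (m₁,m₂,m₃,m₄) ∈ ℕ⁴, every j ∈ {1,2,3,4} and every i ∈ {1,2,3,4} with i ≠ j, one has a_{m+e_i, j} · (m_i+1)² − a_{m+e_j, j} · (m_j+1)² = 2 · a_{m+e_j} · (m_j+1), where e_i denotes the i-th standard unit multi-index. -/
/-- The Taylor coefficients `a_n = (-1)^|n| (|n|! / (n₁! n₂! n₃! n₄!))²` of the holomorphic
period of the K3 family associated with the unequal-mass three-loop banana integral. -/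
noncomputable def bananaA (n : Fin 4 → ℕ) : ℝ :=
  (-1) ^ (∑ i, n i) *
    ((Nat.factorial (∑ i, n i) : ℝ) / ∏ i, (Nat.factorial (n i) : ℝ)) ^ 2

/-- The harmonic number `S₁(n) = ∑_{k=1}^n 1/k`, with `S₁(0) = 0`. -/
noncomputable def harmonicS1 (n : ℕ) : ℝ := ∑ k ∈ Finset.range n, (1 : ℝ) / (k + 1)

/-- The coefficients `a_{n,j} = 2 a_n (S₁(|n|) - S₁(n_j))` of the single-logarithmic
Frobenius periods. -/
noncomputable def bananaAlog (n : Fin 4 → ℕ) (j : Fin 4) : ℝ :=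
  2 * bananaA n * (harmonicS1 (∑ i, n i) - harmonicS1 (n j))

lemma banana_sum_single (m : Fin 4 → ℕ) (i : Fin 4) :
    (∑ k, ((m + Pi.single i 1 : Fin 4 → ℕ) k)) = (∑ k, m k) + 1 := by
  simp [Finset.sum_add_distrib]

lemma banana_prod_fact (m : Fin 4 → ℕ) (i : Fin 4) :
    (∏ k, (Nat.factorial (((m + Pi.single i 1 : Fin 4 → ℕ) k)) : ℝ))
      = ((m i : ℝ) + 1) * ∏ k, (Nat.factorial (m k) : ℝ) := by
  rw [← Finset.mul_prod_erase _ _ (Finset.mem_univ i),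
      ← Finset.mul_prod_erase Finset.univ (fun k => (Nat.factorial (m k) : ℝ)) (Finset.mem_univ i)]
  have h2 : ∀ k ∈ Finset.univ.erase i,
      (Nat.factorial (((m + Pi.single i 1 : Fin 4 → ℕ) k)) : ℝ) = (Nat.factorial (m k) : ℝ) := by
    intro k hk
    have hki : k ≠ i := (Finset.mem_erase.mp hk).1
    simp [Pi.single_eq_of_ne hki]
  rw [Finset.prod_congr rfl h2]
  have h1 : ((m + Pi.single i 1 : Fin 4 → ℕ) i) = m i + 1 := by simp
  rw [h1, Nat.factorial_succ]
  push_cast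
  ring

lemma bananaA_key (m : Fin 4 → ℕ) (i : Fin 4) :
    bananaA (m + Pi.single i 1) * ((m i : ℝ) + 1) ^ 2
      = (-1) ^ ((∑ k, m k) + 1) *
        ((Nat.factorial ((∑ k, m k) + 1) : ℝ) / ∏ k, (Nat.factorial (m k) : ℝ)) ^ 2 := by
  unfold bananaA
  rw [banana_sum_single, banana_prod_fact]
  have hpos : (0:ℝ) < ∏ k, (Nat.factorial (m k) : ℝ) :=
    Finset.prod_pos (fun k _ => by positivity)
  have hP : (∏ k, (Nat.factorial (m k) : ℝ)) ≠ 0 := ne_of_gt hpos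
  have hmi : ((m i : ℝ) + 1) ≠ 0 := by positivity
  field_simp

/-- For every multi-index `m ∈ ℕ⁴`, every `j` and every `i ≠ j`,
`a_{m+eᵢ,j} (mᵢ+1)² - a_{m+eⱼ,j} (mⱼ+1)² = 2 a_{m+eⱼ} (mⱼ+1)`. -/
theorem bananaAlog_relation (m : Fin 4 → ℕ) (j i : Fin 4) (hij : i ≠ j) :
    bananaAlog (m + Pi.single i 1) j * ((m i : ℝ) + 1) ^ 2
      - bananaAlog (m + Pi.single j 1) j * ((m j : ℝ) + 1) ^ 2
      = 2 * bananaA (m + Pi.single j 1) * ((m j : ℝ) + 1) := by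
  have hA_i := bananaA_key m i
  have hA_j := bananaA_key m j
  set A : ℝ := (-1) ^ ((∑ k, m k) + 1) *
      ((Nat.factorial ((∑ k, m k) + 1) : ℝ) / ∏ k, (Nat.factorial (m k) : ℝ)) ^ 2 with hA
  have hci : ((m i : ℝ) + 1) ^ 2 ≠ 0 := by positivity
  have hcj2 : ((m j : ℝ) + 1) ^ 2 ≠ 0 := by positivity
  have hcj : ((m j : ℝ) + 1) ≠ 0 := by positivity
  have hBi : bananaA (m + Pi.single i 1) = A / ((m i : ℝ) + 1) ^ 2 :=
    (eq_div_iff hci).mpr hA_i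
  have hBj : bananaA (m + Pi.single j 1) = A / ((m j : ℝ) + 1) ^ 2 :=
    (eq_div_iff hcj2).mpr hA_j
  have hji : ((m + Pi.single i 1 : Fin 4 → ℕ) j) = m j := by
    simp [Pi.single_eq_of_ne hij.symm]
  have hjj : ((m + Pi.single j 1 : Fin 4 → ℕ) j) = m j + 1 := by simp
  have hH : harmonicS1 (m j + 1) = harmonicS1 (m j) + 1 / ((m j : ℝ) + 1) := by
    simp [harmonicS1, Finset.sum_range_succ]
  rw [bananaAlog, bananaAlog, banana_sum_single, banana_sum_single, hji, hjj, hH,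
      hBi, hBj]
  field_simp
  ring
end

section
/- The holomorphic period ψ₀ satisfies the symmetric second-order Picard–Fuchs relations of the unequal-mass three-loop banana integral: for all y = (y₁,y₂,y₃,y₄) ∈ ℝ⁴ with |y_i| < 1/16 for each i, and for all i, j ∈ {1,2,3,4}, one has y_i ∂²ψ₀/∂y_i² + ∂ψ₀/∂y_i = y_j ∂²ψ₀/∂y_j² + ∂ψ₀/∂y_j, i.e. ∂/∂y_i ( y_i ∂ψ₀/∂y_i ) = ∂/∂y_j ( y_j ∂ψ₀/∂y_j ). -/
/-- The holomorphic period `ψ₀(y) = ∑_{n∈ℕ⁴} a_n y^n`. -/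
noncomputable def psi0 (y : Fin 4 → ℝ) : ℝ :=
  ∑' n : Fin 4 → ℕ, bananaA n * ∏ i, y i ^ n i

/-- The partial derivative `∂f/∂yᵢ` of a function of four real variables. -/
noncomputable def pderiv (i : Fin 4) (f : (Fin 4 → ℝ) → ℝ) (y : Fin 4 → ℝ) : ℝ :=
  deriv (fun t => f (Function.update y i t)) (y i)

open Finset

/-- auxiliary coefficient -/
noncomputable def bananaB (y : Fin 4 → ℝ) (i : Fin 4) (n : Fin 4 → ℕ) : ℝ :=
  bananaA n * ∏ k ∈ Finset.univ.erase i, y k ^ n k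

lemma choose_le_two_pow (N k : ℕ) : N.choose k ≤ 2 ^ N := by
  rcases le_or_gt k N with h | h
  · calc N.choose k ≤ ∑ m ∈ Finset.range (N+1), N.choose m :=
        Finset.single_le_sum (fun _ _ => Nat.zero_le _) (Finset.mem_range.2 (by omega))
    _ = 2 ^ N := Nat.sum_range_choose N
  · simp [Nat.choose_eq_zero_of_lt h]

lemma bananaA_abs_le (n : Fin 4 → ℕ) : |bananaA n| ≤ 16 ^ (∑ i, n i) := by
  have hs : ∑ i, n i = n 0 + n 1 + n 2 + n 3 := by
    simp [Fin.sum_univ_four]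
  set a := n 0 + n 1 with ha
  set b := n 2 + n 3 with hb
  have hfact : Nat.factorial (∑ i, n i)
      = ((a+b).choose a * a.choose (n 0) * b.choose (n 2)) * ∏ i, Nat.factorial (n i) := by
    have h1 : (a+b).choose a * a.factorial * b.factorial = (a+b).factorial := by
      have := Nat.choose_mul_factorial_mul_factorial (Nat.le_add_right a b)
      simpa using this
    have h2 : a.choose (n 0) * (n 0).factorial * (n 1).factorial = a.factorial := by
      have := Nat.choose_mul_factorial_mul_factorial (Nat.le_add_right (n 0) (n 1))
      simpa [ha] using this
    have h3 : b.choose (n 2) * (n 2).factorial * (n 3).factorial = b.factorial := by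
      have := Nat.choose_mul_factorial_mul_factorial (Nat.le_add_right (n 2) (n 3))
      simpa [hb] using this
    have hprod : ∏ i, Nat.factorial (n i)
        = (n 0).factorial * (n 1).factorial * ((n 2).factorial * (n 3).factorial) := by
      simp [Fin.prod_univ_four]; ring
    rw [hs, show n 0 + n 1 + n 2 + n 3 = a + b by omega, ← h1, ← h2, ← h3, hprod]
    ring
  have hratio : (Nat.factorial (∑ i, n i) : ℝ) / ∏ i, (Nat.factorial (n i) : ℝ)
      = ((a+b).choose a * a.choose (n 0) * b.choose (n 2) : ℕ) := by
    have hne : (∏ i, (Nat.factorial (n i) : ℝ)) ≠ 0 := by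
      apply Finset.prod_ne_zero_iff.2
      intro i _
      exact_mod_cast (Nat.factorial_pos (n i)).ne'
    rw [div_eq_iff hne, hfact]
    push_cast [Finset.prod_natCast]
    ring
  have hchoose : ((a+b).choose a * a.choose (n 0) * b.choose (n 2) : ℕ) ≤ 4 ^ (∑ i, n i) := by
    calc (a+b).choose a * a.choose (n 0) * b.choose (n 2)
        ≤ 2 ^ (a+b) * 2 ^ a * 2 ^ b :=
          Nat.mul_le_mul (Nat.mul_le_mul (choose_le_two_pow (a+b) a)
            (choose_le_two_pow a (n 0))) (choose_le_two_pow b (n 2))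
    _ = 4 ^ (a + b) := by
          rw [mul_assoc, ← pow_add, ← pow_add, show (4:ℕ) = 2^2 by norm_num, ← pow_mul]
          congr 1; omega
    _ = 4 ^ (∑ i, n i) := by rw [hs]; congr 1; omega
  have habs : |bananaA n|
      = ((Nat.factorial (∑ i, n i) : ℝ) / ∏ i, (Nat.factorial (n i) : ℝ)) ^ 2 := by
    rw [bananaA, abs_mul, abs_pow, abs_neg, abs_one, one_pow, one_mul,
      abs_of_nonneg (by positivity)]
  rw [habs, hratio]
  calc (((a+b).choose a * a.choose (n 0) * b.choose (n 2) : ℕ) : ℝ) ^ 2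
      ≤ ((4:ℝ) ^ (∑ i, n i)) ^ 2 := by
        apply pow_le_pow_left₀ (by positivity)
        exact_mod_cast hchoose
  _ = 16 ^ (∑ i, n i) := by rw [← pow_mul, pow_mul']; norm_num

lemma summable_g {q : ℝ} (hq0 : 0 ≤ q) (hq : q < 1) :
    Summable (fun m : ℕ => ((m:ℝ)+1)^2 * q ^ m) := by
  have h : ∀ m : ℕ, ((m:ℝ)+1)^2 * q^m = (m:ℝ)^2 * q^m + 2*((m:ℝ)^1*q^m) + q^m := by
    intro m; ring
  have hq' : ‖q‖ < 1 := by rwa [Real.norm_eq_abs, abs_of_nonneg hq0]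
  exact (((summable_pow_mul_geometric_of_norm_lt_one 2 hq').add
    ((summable_pow_mul_geometric_of_norm_lt_one 1 hq').mul_left 2)).add
    (summable_geometric_of_lt_one hq0 hq)).congr (fun m => (h m).symm)

set_option maxHeartbeats 1000000 in
lemma summable_master {q : ℝ} (hq0 : 0 ≤ q) (hq : q < 1) :
    Summable (fun n : Fin 4 → ℕ => ∏ k, (((n k : ℝ)+1)^2 * q ^ n k)) := by
  have hg := summable_g hq0 hq
  have hg0 : ∀ m : ℕ, 0 ≤ ((m:ℝ)+1)^2 * q ^ m := fun m => by positivity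
  have h2 : Summable (fun p : ℕ × ℕ =>
      (((p.1:ℝ)+1)^2 * q ^ p.1) * (((p.2:ℝ)+1)^2 * q ^ p.2)) :=
    hg.mul_of_nonneg hg (fun m => hg0 m) (fun m => hg0 m)
  have h20 : ∀ p : ℕ × ℕ, 0 ≤ (((p.1:ℝ)+1)^2 * q ^ p.1) * (((p.2:ℝ)+1)^2 * q ^ p.2) :=
    fun p => mul_nonneg (hg0 _) (hg0 _)
  have h4 : Summable (fun p : (ℕ × ℕ) × ℕ × ℕ =>
      ((((p.1.1:ℝ)+1)^2 * q ^ p.1.1) * (((p.1.2:ℝ)+1)^2 * q ^ p.1.2)) *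
      ((((p.2.1:ℝ)+1)^2 * q ^ p.2.1) * (((p.2.2:ℝ)+1)^2 * q ^ p.2.2))) :=
    h2.mul_of_nonneg h2 h20 h20
  have hinj : Function.Injective (fun n : Fin 4 → ℕ => ((n 0, n 1), (n 2, n 3))) := by
    intro n m h
    simp only [Prod.mk.injEq] at h
    funext k
    fin_cases k <;> tauto
  have := h4.comp_injective hinj
  exact this.congr (fun n => by
    simp only [Function.comp]; rw [Fin.prod_univ_four]; ring)

lemma psi0_update (y : Fin 4 → ℝ) (i : Fin 4) (t : ℝ) :
    psi0 (Function.update y i t) = ∑' n : Fin 4 → ℕ, bananaB y i n * t ^ n i := by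
  unfold psi0
  apply tsum_congr
  intro n
  rw [bananaB, ← Finset.mul_prod_erase Finset.univ _ (Finset.mem_univ i),
    Function.update_self]
  have hh : ∏ k ∈ Finset.univ.erase i, (Function.update y i t k) ^ n k
      = ∏ k ∈ Finset.univ.erase i, y k ^ n k :=
    Finset.prod_congr rfl (fun k hk => by
      rw [Function.update_of_ne (Finset.ne_of_mem_erase hk)])
  rw [hh]
  ring

lemma deriv_aux (m : ℕ) (t : ℝ) :
    t * ((m:ℝ) * ((m:ℝ) - 1) * t ^ (m - 2)) + (m:ℝ) * t ^ (m - 1)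
      = (m:ℝ)^2 * t ^ (m-1) := by
  match m with
  | 0 => simp
  | 1 => simp
  | (m+2) =>
    have h1 : m + 2 - 2 = m := by omega
    have h2 : m + 2 - 1 = m + 1 := by omega
    rw [h1, h2]
    push_cast
    ring

set_option maxHeartbeats 1000000 in
lemma bananaB_bound {y : Fin 4 → ℝ} {R : ℝ} (hR0 : 0 < R) (hR1 : R ≤ 1)
    (hy : ∀ k, |y k| ≤ R) (i : Fin 4) (n : Fin 4 → ℕ) {c : ℝ} (hc0 : 0 ≤ c)
    (hc : c ≤ ((n i : ℝ) + 1)^2) {d : ℕ} (hd : d ≤ 2) {t : ℝ} (ht : |t| ≤ R) :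
    ‖bananaB y i n * (c * t ^ (n i - d))‖
      ≤ (1/R^2) * ∏ k, (((n k : ℝ)+1)^2 * (16*R) ^ (n k)) := by
  have hBabs : |bananaB y i n| ≤ 16 ^ (∑ k, n k) * ∏ k ∈ Finset.univ.erase i, R ^ n k := by
    rw [bananaB, abs_mul]
    apply mul_le_mul (bananaA_abs_le n) _ (abs_nonneg _) (by positivity)
    rw [abs_prod]
    apply Finset.prod_le_prod (fun k _ => abs_nonneg _)
    intro k _
    rw [abs_pow]
    exact pow_le_pow_left₀ (abs_nonneg _) (hy k) _
  have hpow : R ^ (n i - d) ≤ R ^ (n i) / R^2 := by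
    rw [le_div_iff₀ (by positivity), ← pow_add]
    exact pow_le_pow_of_le_one hR0.le hR1 (by omega)
  have htpow : |t| ^ (n i - d) ≤ R ^ (n i - d) :=
    pow_le_pow_left₀ (abs_nonneg _) ht _
  have step1 : ‖bananaB y i n * (c * t ^ (n i - d))‖
      ≤ (16 ^ (∑ k, n k) * ∏ k ∈ Finset.univ.erase i, R ^ n k)
        * (((n i : ℝ) + 1)^2 * (R ^ (n i) / R^2)) := by
    rw [Real.norm_eq_abs, abs_mul, abs_mul, abs_pow]
    apply mul_le_mul hBabs _ (by positivity) (by positivity)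
    rw [abs_of_nonneg hc0]
    apply mul_le_mul hc (htpow.trans hpow) (by positivity) (by positivity)

  have h16 : (16:ℝ) ^ (∑ k, n k) = ∏ k, (16:ℝ) ^ n k := (Finset.prod_pow_eq_pow_sum _ _ _).symm
  have hRprod : R ^ (n i) * ∏ k ∈ Finset.univ.erase i, R ^ n k = ∏ k, R ^ n k :=
    Finset.mul_prod_erase Finset.univ (fun k => R ^ n k) (Finset.mem_univ i)
  have hsingle : (((n i : ℝ) + 1)^2) * ∏ k ∈ Finset.univ.erase i, (((n k : ℝ)+1)^2)
      = ∏ k, (((n k : ℝ)+1)^2) :=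
    Finset.mul_prod_erase Finset.univ (fun k => ((n k : ℝ)+1)^2) (Finset.mem_univ i)
  have heq : (16 ^ (∑ k, n k) * ∏ k ∈ Finset.univ.erase i, R ^ n k)
      * (((n i : ℝ) + 1)^2 * (R ^ (n i) / R^2))
      = (1/R^2) * ((((n i : ℝ) + 1)^2) * ∏ k, ((16*R : ℝ) ^ n k)) := by
    have hprodmul : ∏ k, ((16*R : ℝ) ^ n k) = (∏ k, (16:ℝ) ^ n k) * ∏ k, R ^ n k := by
      rw [← Finset.prod_mul_distrib]
      exact Finset.prod_congr rfl (fun k _ => mul_pow _ _ _)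
    rw [hprodmul, ← h16, ← hRprod]
    field_simp
  refine step1.trans ?_
  rw [heq]
  apply mul_le_mul_of_nonneg_left _ (by positivity)
  have h1 : (1:ℝ) ≤ ∏ k ∈ Finset.univ.erase i, ((n k : ℝ)+1)^2 := by
    have := Finset.prod_le_prod (s := Finset.univ.erase i)
      (f := fun _ => (1:ℝ)) (g := fun k => ((n k : ℝ)+1)^2)
      (fun k _ => zero_le_one) (fun k _ => one_le_pow₀ (by linarith [(Nat.cast_nonneg (n k) : (0:ℝ) ≤ (n k : ℝ))]))
    simpa using this
  have hsingle' : ((n i : ℝ)+1)^2 ≤ ∏ k, ((n k : ℝ)+1)^2 := by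
    rw [← hsingle]
    exact le_mul_of_one_le_right (by positivity) h1
  calc (((n i : ℝ)+1)^2) * ∏ k, ((16*R : ℝ) ^ n k)
      ≤ (∏ k, ((n k : ℝ)+1)^2) * ∏ k, ((16*R : ℝ) ^ n k) :=
        mul_le_mul_of_nonneg_right hsingle' (by positivity)
    _ = ∏ k, (((n k : ℝ)+1)^2 * (16*R) ^ n k) := Finset.prod_mul_distrib.symm

/-- index shift -/
def bshift (i : Fin 4) (m : Fin 4 → ℕ) : Fin 4 → ℕ := Function.update m i (m i + 1)

lemma bshift_same (i : Fin 4) (m : Fin 4 → ℕ) : bshift i m i = m i + 1 :=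
  Function.update_self i _ m

lemma bshift_ne (i : Fin 4) (m : Fin 4 → ℕ) (k : Fin 4) (hk : k ≠ i) :
    bshift i m k = m k := Function.update_of_ne hk _ m

set_option maxHeartbeats 1000000 in
lemma psi0_theta_eq (y : Fin 4 → ℝ) (hy : ∀ k, |y k| < 1/16) (i : Fin 4) :
    y i * pderiv i (pderiv i psi0) y + pderiv i psi0 y
      = ∑' m : Fin 4 → ℕ, ((-1) ^ ((∑ k, m k) + 1) *
          ((Nat.factorial ((∑ k, m k) + 1) : ℝ) / ∏ k, (Nat.factorial (m k) : ℝ)) ^ 2)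
          * ∏ k, y k ^ m k := by
  have hA : ∀ k : Fin 4, |y k| ≤ max (max |y 0| |y 1|) (max |y 2| |y 3|) := by
    intro k; fin_cases k
    · exact le_max_of_le_left (le_max_left _ _)
    · exact le_max_of_le_left (le_max_right _ _)
    · exact le_max_of_le_right (le_max_left _ _)
    · exact le_max_of_le_right (le_max_right _ _)
  set A := max (max |y 0| |y 1|) (max |y 2| |y 3|) with hAdef
  have hA16 : A < 1/16 := max_lt (max_lt (hy 0) (hy 1)) (max_lt (hy 2) (hy 3))
  have hA0 : 0 ≤ A := (abs_nonneg _).trans (hA 0)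
  set R : ℝ := (A + 1/16)/2 with hRdef
  have hR0 : 0 < R := by rw [hRdef]; linarith
  have hAR : A < R := by rw [hRdef]; linarith
  have hR16 : R < 1/16 := by rw [hRdef]; linarith
  have hR1 : R ≤ 1 := by linarith
  have hyR : ∀ k, |y k| ≤ R := fun k => (hA k).trans hAR.le
  have hq0 : (0:ℝ) ≤ 16*R := by linarith
  have hq1 : 16*R < 1 := by linarith
  set u : (Fin 4 → ℕ) → ℝ :=
    fun n => (1/R^2) * ∏ k, (((n k : ℝ)+1)^2 * (16*R) ^ (n k)) with hudef
  have hu : Summable u := (summable_master hq0 hq1).mul_left _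
  set s : Set ℝ := Metric.ball (0:ℝ) R with hsdef
  have hso : IsOpen s := Metric.isOpen_ball
  have hsc : IsPreconnected s := (convex_ball (0:ℝ) R).isPreconnected
  have hyis : y i ∈ s := by
    rw [hsdef, mem_ball_zero_iff, Real.norm_eq_abs]
    exact (hA i).trans_lt hAR
  have h0s : (0:ℝ) ∈ s := by
    rw [hsdef, mem_ball_zero_iff, norm_zero]; exact hR0
  have hts : ∀ t ∈ s, |t| ≤ R := by
    intro t ht
    rw [hsdef, mem_ball_zero_iff, Real.norm_eq_abs] at ht
    exact ht.le
  have hcsq : ∀ n : Fin 4 → ℕ, ((n i : ℝ)) ≤ ((n i : ℝ) + 1)^2 := by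
    intro n; nlinarith [(Nat.cast_nonneg (n i) : (0:ℝ) ≤ (n i : ℝ))]
  have hder1 : ∀ (n : Fin 4 → ℕ) (t : ℝ), t ∈ s →
      HasDerivAt (fun t => bananaB y i n * t ^ n i)
        (bananaB y i n * ((n i : ℝ) * t ^ (n i - 1))) t :=
    fun n t _ => (hasDerivAt_pow (n i) t).const_mul (bananaB y i n)
  have hder2 : ∀ (n : Fin 4 → ℕ) (t : ℝ), t ∈ s →
      HasDerivAt (fun t => bananaB y i n * ((n i : ℝ) * t ^ (n i - 1)))
        (bananaB y i n * (((n i : ℝ) * ((n i : ℝ) - 1)) * t ^ (n i - 2))) t := by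
    intro n t _
    have h := (hasDerivAt_pow (n i - 1) t).const_mul (bananaB y i n * (n i : ℝ))
    have hc : bananaB y i n * (n i : ℝ) * (((n i - 1 : ℕ) : ℝ) * t ^ (n i - 1 - 1))
        = bananaB y i n * (((n i : ℝ) * ((n i : ℝ) - 1)) * t ^ (n i - 2)) := by
      rcases Nat.eq_zero_or_pos (n i) with h0 | h0
      · simp [h0]
      · rw [Nat.cast_sub h0, Nat.sub_sub]
        push_cast
        ring
    rw [hc] at h
    exact h.congr_of_eventuallyEq (Filter.Eventually.of_forall (fun z => by ring))
  have hb1 : ∀ (n : Fin 4 → ℕ) (t : ℝ), t ∈ s →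
      ‖bananaB y i n * ((n i : ℝ) * t ^ (n i - 1))‖ ≤ u n := by
    intro n t ht
    exact bananaB_bound hR0 hR1 hyR i n (Nat.cast_nonneg _) (hcsq n) (by norm_num)
      (hts t ht)
  have hb2 : ∀ (n : Fin 4 → ℕ) (t : ℝ), t ∈ s →
      ‖bananaB y i n * (((n i : ℝ) * ((n i : ℝ) - 1)) * t ^ (n i - 2))‖ ≤ u n := by
    intro n t ht
    have hx : (n i : ℝ) = 0 ∨ 1 ≤ (n i : ℝ) := by
      rcases Nat.eq_zero_or_pos (n i) with h | h
      · left; simp [h]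
      · right; exact_mod_cast h
    have hc0 : 0 ≤ (n i : ℝ) * ((n i : ℝ) - 1) := by
      rcases hx with h | h
      · simp [h]
      · nlinarith
    exact bananaB_bound hR0 hR1 hyR i n hc0
      (by nlinarith [(Nat.cast_nonneg (n i) : (0:ℝ) ≤ (n i : ℝ))]) (le_refl 2) (hts t ht)
  have hb0 : ∀ n : Fin 4 → ℕ, ‖bananaB y i n * (0:ℝ) ^ (n i)‖ ≤ u n := by
    intro n
    have h : bananaB y i n * (0:ℝ) ^ (n i)
        = bananaB y i n * (1 * (0:ℝ) ^ (n i - 0)) := by norm_num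
    rw [h]
    exact bananaB_bound hR0 hR1 hyR i n zero_le_one
      (by nlinarith [(Nat.cast_nonneg (n i) : (0:ℝ) ≤ (n i : ℝ))]) (by norm_num)
      (by rw [abs_zero]; exact hR0.le)
  have hsum0 : Summable (fun n : Fin 4 → ℕ => bananaB y i n * (0:ℝ) ^ (n i)) :=
    Summable.of_norm_bounded hu hb0
  have H1 : ∀ x ∈ s, HasDerivAt (fun t => ∑' n : Fin 4 → ℕ, bananaB y i n * t ^ n i)
      (∑' n : Fin 4 → ℕ, bananaB y i n * ((n i : ℝ) * x ^ (n i - 1))) x :=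
    fun x hx => hasDerivAt_tsum_of_isPreconnected hu hso hsc hder1 hb1 h0s hsum0 hx
  have hsum1 : Summable
      (fun n : Fin 4 → ℕ => bananaB y i n * ((n i : ℝ) * (0:ℝ) ^ (n i - 1))) :=
    Summable.of_norm_bounded hu (fun n => hb1 n 0 h0s)
  have H2 : ∀ x ∈ s, HasDerivAt
      (fun t => ∑' n : Fin 4 → ℕ, bananaB y i n * ((n i : ℝ) * t ^ (n i - 1)))
      (∑' n : Fin 4 → ℕ, bananaB y i n * (((n i : ℝ) * ((n i : ℝ) - 1)) * x ^ (n i - 2))) x :=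
    fun x hx => hasDerivAt_tsum_of_isPreconnected hu hso hsc hder2 hb2 h0s hsum1 hx
  have hfun : (fun t => psi0 (Function.update y i t))
      = fun t => ∑' n : Fin 4 → ℕ, bananaB y i n * t ^ n i := funext (psi0_update y i)
  have pd1 : pderiv i psi0 y
      = ∑' n : Fin 4 → ℕ, bananaB y i n * ((n i : ℝ) * (y i) ^ (n i - 1)) := by
    rw [pderiv, hfun]
    exact (H1 (y i) hyis).deriv
  have pdfun : ∀ t ∈ s, pderiv i psi0 (Function.update y i t)
      = ∑' n : Fin 4 → ℕ, bananaB y i n * ((n i : ℝ) * t ^ (n i - 1)) := by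
    intro t ht
    rw [pderiv, Function.update_self]
    have h : (fun z => psi0 (Function.update (Function.update y i t) i z))
        = fun z => ∑' n : Fin 4 → ℕ, bananaB y i n * z ^ n i := by
      funext z
      rw [Function.update_idem]
      exact psi0_update y i z
    rw [h]
    exact (H1 t ht).deriv
  have pd2 : pderiv i (pderiv i psi0) y
      = ∑' n : Fin 4 → ℕ, bananaB y i n * (((n i : ℝ) * ((n i : ℝ) - 1)) * (y i) ^ (n i - 2)) := by
    rw [pderiv]
    have heq : (fun t => pderiv i psi0 (Function.update y i t))
        =ᶠ[nhds (y i)] fun t => ∑' n : Fin 4 → ℕ, bananaB y i n * ((n i : ℝ) * t ^ (n i - 1)) := by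
      filter_upwards [hso.mem_nhds hyis] with t ht using pdfun t ht
    exact ((H2 (y i) hyis).congr_of_eventuallyEq heq).deriv
  rw [pd1, pd2]
  have hsum' : Summable
      (fun n : Fin 4 → ℕ => bananaB y i n * ((n i : ℝ) * (y i) ^ (n i - 1))) :=
    Summable.of_norm_bounded hu (fun n => hb1 n (y i) hyis)
  have hsum'' : Summable
      (fun n : Fin 4 → ℕ => bananaB y i n * (((n i : ℝ) * ((n i : ℝ) - 1)) * (y i) ^ (n i - 2))) :=
    Summable.of_norm_bounded hu (fun n => hb2 n (y i) hyis)
  rw [← tsum_mul_left, ← Summable.tsum_add (hsum''.mul_left (y i)) hsum']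
  have hterm : ∀ n : Fin 4 → ℕ,
      y i * (bananaB y i n * (((n i : ℝ) * ((n i : ℝ) - 1)) * (y i) ^ (n i - 2)))
        + bananaB y i n * ((n i : ℝ) * (y i) ^ (n i - 1))
      = bananaB y i n * (((n i : ℝ))^2 * (y i) ^ (n i - 1)) := by
    intro n
    linear_combination bananaB y i n * deriv_aux (n i) (y i)
  rw [tsum_congr hterm]
  -- reindexing
  have hinj : Function.Injective (bshift i) := by
    intro m m' h
    funext k
    rcases eq_or_ne k i with rfl | hk
    · have h2 := congrFun h k
      rw [bshift_same, bshift_same] at h2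
      omega
    · have h2 := congrFun h k
      rwa [bshift_ne _ _ _ hk, bshift_ne _ _ _ hk] at h2
  have hsupp : Function.support
      (fun n : Fin 4 → ℕ => bananaB y i n * (((n i : ℝ))^2 * (y i) ^ (n i - 1)))
      ⊆ Set.range (bshift i) := by
    intro n hn
    rcases Nat.eq_zero_or_pos (n i) with h0 | h0
    · exact absurd (by simp [h0]) hn
    · refine ⟨Function.update n i (n i - 1), ?_⟩
      funext k
      rcases eq_or_ne k i with rfl | hk
      · rw [bshift_same, Function.update_self]
        omega
      · rw [bshift_ne _ _ _ hk, Function.update_of_ne hk]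
  rw [← hinj.tsum_eq hsupp]
  apply tsum_congr
  intro m
  have h1 : bshift i m i = m i + 1 := bshift_same i m
  have hS : ∑ k, bshift i m k = (∑ k, m k) + 1 := by
    have e1 := Finset.sum_update_of_mem (Finset.mem_univ i) (f := m) (b := m i + 1)
    have e2 := Finset.add_sum_erase Finset.univ m (Finset.mem_univ i)
    rw [Finset.erase_eq] at e2
    rw [show (∑ k, bshift i m k) = ∑ k, Function.update m i (m i + 1) k from rfl, e1]
    omega
  have hPne : (∏ k, ((Nat.factorial (m k)) : ℝ)) ≠ 0 := by
    apply Finset.prod_ne_zero_iff.2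
    intro k _
    exact_mod_cast (Nat.factorial_pos (m k)).ne'
  have hprodfact : ∏ k, ((Nat.factorial (bshift i m k)) : ℝ)
      = ((m i : ℝ) + 1) * ∏ k, ((Nat.factorial (m k)) : ℝ) := by
    rw [← Finset.mul_prod_erase Finset.univ (fun k => ((Nat.factorial (bshift i m k)) : ℝ))
      (Finset.mem_univ i)]
    rw [← Finset.mul_prod_erase Finset.univ (fun k => ((Nat.factorial (m k)) : ℝ))
      (Finset.mem_univ i)]
    have he : ∏ k ∈ Finset.univ.erase i, ((Nat.factorial (bshift i m k)) : ℝ)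
        = ∏ k ∈ Finset.univ.erase i, ((Nat.factorial (m k)) : ℝ) :=
      Finset.prod_congr rfl (fun k hk => by
        rw [bshift_ne _ _ _ (Finset.ne_of_mem_erase hk)])
    rw [he, h1, Nat.factorial_succ]
    push_cast
    ring
  have hyprod : ∏ k ∈ Finset.univ.erase i, y k ^ (bshift i m k)
      = ∏ k ∈ Finset.univ.erase i, y k ^ m k :=
    Finset.prod_congr rfl (fun k hk => by
      rw [bshift_ne _ _ _ (Finset.ne_of_mem_erase hk)])
  have hymul : y i ^ (m i) * ∏ k ∈ Finset.univ.erase i, y k ^ m k = ∏ k, y k ^ m k :=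
    Finset.mul_prod_erase Finset.univ (fun k => y k ^ m k) (Finset.mem_univ i)
  rw [bananaB, bananaA, hS, hprodfact, hyprod, h1]
  rw [show m i + 1 - 1 = m i from rfl, ← hymul]
  have hmne : ((m i : ℝ) + 1) ≠ 0 := by positivity
  push_cast
  field_simp


/-- The holomorphic period satisfies the symmetric second-order Picard–Fuchs relations:
for `|yᵢ| < 1/16` and all `i, j`,
`yᵢ ∂²ψ₀/∂yᵢ² + ∂ψ₀/∂yᵢ = y_j ∂²ψ₀/∂y_j² + ∂ψ₀/∂y_j`. -/
theorem psi0_picardFuchs_symmetric (y : Fin 4 → ℝ) (hy : ∀ i, |y i| < 1 / 16)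
    (i j : Fin 4) :
    y i * pderiv i (pderiv i psi0) y + pderiv i psi0 y
      = y j * pderiv j (pderiv j psi0) y + pderiv j psi0 y := by
  rw [psi0_theta_eq y hy i, psi0_theta_eq y hy j]
end

section
/- The holomorphic period ψ₀ satisfies the explicit differential system derived for the period ψ of the unequal-mass three-loop banana integral: for all y = (y₁,y₂,y₃,y₄) ∈ ℝ⁴ with |y_i| < 1/16 for each i, defining R(y) = −(1/64) Σ_{j=1}^{4} ( y_j ∂²ψ₀/∂y_j² + (8 y_j + 1) ∂ψ₀/∂y_j + ψ₀ ), one has for each i ∈ {1,2,3,4}: y_i ∂²ψ₀/∂y_i² = −ψ₀ − (2 y_i + 1) ∂ψ₀/∂y_i − 2 Σ_{k ≠ i} y_k ∂ψ₀/∂y_k − 16 R(y). -/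
/-- The quantity `R(y) = -(1/64) ∑_j ( y_j ∂²ψ₀/∂y_j² + (8 y_j + 1) ∂ψ₀/∂y_j + ψ₀ )`. -/
noncomputable def Rm2F5 (y : Fin 4 → ℝ) : ℝ :=
  -(1 / 64) * ∑ j, (y j * pderiv j (pderiv j psi0) y
    + (8 * y j + 1) * pderiv j psi0 y + psi0 y)

open Finset Function Filter

namespace BananaAux

/-! ### Coefficient bounds -/

lemma multinomial_le_four_pow (n : Fin 4 → ℕ) :
    Nat.multinomial Finset.univ n ≤ 4 ^ (∑ j, n j) := by
  have h := Finset.sum_pow_eq_sum_piAntidiag (Finset.univ : Finset (Fin 4)) (fun _ => (1 : ℕ))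
    (∑ j, n j)
  simp only [Finset.sum_const, Finset.card_univ, Fintype.card_fin, smul_eq_mul, mul_one,
    one_pow, Finset.prod_const_one, Nat.cast_id] at h
  have hn : n ∈ Finset.piAntidiag (Finset.univ : Finset (Fin 4)) (∑ j, n j) := by
    simp [Finset.mem_piAntidiag]
  calc Nat.multinomial Finset.univ n
      ≤ ∑ k ∈ Finset.piAntidiag (Finset.univ : Finset (Fin 4)) (∑ j, n j),
          Nat.multinomial Finset.univ k := Finset.single_le_sum (fun k _ => Nat.zero_le _) hn
    _ = 4 ^ (∑ j, n j) := h.symm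

lemma abs_bananaA_le (n : Fin 4 → ℕ) : |bananaA n| ≤ 16 ^ (∑ j, n j) := by
  have hP : (0:ℝ) < ∏ j, ((n j).factorial : ℝ) :=
    Finset.prod_pos fun j _ => by exact_mod_cast (n j).factorial_pos
  have hmn : ((∑ j, n j).factorial : ℝ) / ∏ j, ((n j).factorial : ℝ)
      = (Nat.multinomial Finset.univ n : ℝ) := by
    have h := Nat.multinomial_spec Finset.univ n
    have h' : (∏ j, ((n j).factorial : ℝ)) * (Nat.multinomial Finset.univ n : ℝ)
        = ((∑ j, n j).factorial : ℝ) := by exact_mod_cast congrArg (Nat.cast (R := ℝ)) h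
    rw [div_eq_iff hP.ne']
    linear_combination -h'
  have habs : |bananaA n| = ((Nat.multinomial Finset.univ n : ℝ)) ^ 2 := by
    rw [bananaA, hmn, abs_mul, abs_pow, abs_neg, abs_one, one_pow, one_mul, abs_pow, sq_abs]
  rw [habs]
  have h4 : (Nat.multinomial Finset.univ n : ℝ) ≤ (4:ℝ) ^ (∑ j, n j) := by
    exact_mod_cast multinomial_le_four_pow n
  calc ((Nat.multinomial Finset.univ n : ℝ)) ^ 2 ≤ ((4:ℝ) ^ (∑ j, n j)) ^ 2 := by
        exact pow_le_pow_left₀ (Nat.cast_nonneg _) h4 2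
    _ = 16 ^ (∑ j, n j) := by rw [← pow_mul, mul_comm, pow_mul]; norm_num

/-! ### Summability -/

lemma summable_pi_prod : ∀ {N : ℕ} (g : Fin N → ℕ → ℝ), (∀ j m, 0 ≤ g j m) →
    (∀ j, Summable (g j)) → Summable fun n : Fin N → ℕ => ∏ j, g j (n j) := by
  intro N
  induction N with
  | zero =>
    intro g _ _
    have h : (fun n : Fin 0 → ℕ => ∏ j, g j (n j)) = fun _ => 1 := funext fun n => by simp
    rw [h]
    exact .of_finite
  | succ N ih =>
    intro g hg0 hgs
    have htail : Summable fun p : Fin N → ℕ => ∏ j, g (Fin.succ j) (p j) :=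
      ih (fun j => g j.succ) (fun j m => hg0 _ _) fun j => hgs _
    have h0 : Summable fun p : ℕ × (Fin N → ℕ) => g 0 p.1 * ∏ j, g (Fin.succ j) (p.2 j) :=
      Summable.mul_of_nonneg (f := g 0) (g := fun p : Fin N → ℕ => ∏ j, g (Fin.succ j) (p j))
        (hgs 0) htail (by intro m; exact hg0 0 m)
        (by intro p; exact Finset.prod_nonneg fun j _ => hg0 _ _)
    refine (Fin.consEquiv fun _ => ℕ).summable_iff.1 (h0.congr fun p => ?_)
    simp [Fin.consEquiv, Fin.prod_univ_succ]

lemma summable_geom_like (k : ℕ) {r : ℝ} (hr0 : 0 < r) (hr1 : 16 * r < 1) :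
    Summable fun m : ℕ => (16:ℝ) ^ m * ((m:ℝ) ^ k * r ^ (m - k)) := by
  have hr' : r < 1 := by linarith
  have hs : Summable fun m : ℕ => 1 / r ^ k * ((m:ℝ) ^ k * (16 * r) ^ m) := by
    refine Summable.mul_left _ ?_
    exact summable_pow_mul_geometric_of_norm_lt_one k
      (by rw [Real.norm_eq_abs, abs_of_pos (by linarith)]; exact hr1)
  refine Summable.of_nonneg_of_le (fun m => by positivity) (fun m => ?_) hs
  have hle : m ≤ m - k + k := le_tsub_add
  have hpow : r ^ (m - k) * r ^ k ≤ r ^ m := by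
    rw [← pow_add]
    exact pow_le_pow_of_le_one hr0.le hr'.le hle
  rw [← mul_le_mul_iff_of_pos_right (pow_pos hr0 k)]
  have hrk : (r:ℝ) ^ k ≠ 0 := (pow_pos hr0 k).ne'
  have hrhs : 1 / r ^ k * ((m:ℝ) ^ k * (16 * r) ^ m) * r ^ k = (m:ℝ) ^ k * (16 ^ m * r ^ m) := by
    rw [mul_pow]
    field_simp
  rw [hrhs]
  calc (16:ℝ) ^ m * ((m:ℝ) ^ k * r ^ (m - k)) * r ^ k
      = 16 ^ m * (m:ℝ) ^ k * (r ^ (m - k) * r ^ k) := by ring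
    _ ≤ 16 ^ m * (m:ℝ) ^ k * r ^ m := by
        exact mul_le_mul_of_nonneg_left hpow (by positivity)
    _ = (m:ℝ) ^ k * (16 ^ m * r ^ m) := by ring

lemma summable_major (x : Fin 4 → ℝ) (hx : ∀ j, |x j| < 1/16) (i : Fin 4) (k : ℕ)
    {r : ℝ} (hr0 : 0 < r) (hr16 : r < 1/16) :
    Summable fun n : Fin 4 → ℕ =>
      (16:ℝ) ^ (∑ j, n j) *
        ((n i : ℝ) ^ k * r ^ (n i - k) * ∏ j ∈ Finset.univ.erase i, |x j| ^ n j) := by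
  have hg : Summable fun n : Fin 4 → ℕ =>
      ∏ j, (if j = i then (16:ℝ) ^ (n j) * ((n j : ℝ) ^ k * r ^ (n j - k))
            else (16 * |x j|) ^ (n j)) := by
    apply summable_pi_prod (g := fun j m => if j = i then (16:ℝ) ^ m * ((m:ℝ) ^ k * r ^ (m - k))
      else (16 * |x j|) ^ m)
    · intro j m; split <;> positivity
    · intro j; by_cases h : j = i
      · simp only [if_pos h]; exact summable_geom_like k hr0 (by linarith)
      · simp only [if_neg h]
        exact summable_geometric_of_lt_one (by positivity)
          (by have h1 := hx j; have h2 := abs_nonneg (x j); linarith)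
  refine hg.congr fun n => ?_
  rw [← Finset.mul_prod_erase Finset.univ _ (Finset.mem_univ i), if_pos rfl]
  rw [Finset.prod_congr rfl (fun j hj => by
    rw [if_neg (Finset.mem_erase.1 hj).1, mul_pow] :
    ∀ j ∈ Finset.univ.erase i, _ = (16:ℝ) ^ (n j) * |x j| ^ (n j))]
  rw [Finset.prod_mul_distrib]
  have h2 : (16:ℝ) ^ (∑ j, n j) = 16 ^ (n i) * ∏ j ∈ Finset.univ.erase i, (16:ℝ) ^ (n j) := by
    rw [← Finset.prod_pow_eq_pow_sum, ← Finset.mul_prod_erase Finset.univ _ (Finset.mem_univ i)]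
  rw [h2]
  ring

/-! ### Differentiation of series -/

lemma hasDerivAt_tsum_of_bound {ι : Type*} (f f' : ι → ℝ → ℝ) (u : ι → ℝ) {s : Set ℝ}
    (hs : IsOpen s) (hu : Summable u)
    (hderiv : ∀ n, ∀ t ∈ s, HasDerivAt (f n) (f' n t) t)
    (hbound : ∀ n, ∀ t ∈ s, |f' n t| ≤ u n)
    (hsum : ∀ t ∈ s, Summable fun n => f n t)
    {t₀ : ℝ} (ht₀ : t₀ ∈ s) :
    HasDerivAt (fun t => ∑' n, f n t) (∑' n, f' n t₀) t₀ := by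
  apply hasDerivAt_of_tendstoUniformlyOn (f := fun (T : Finset ι) t => ∑ n ∈ T, f n t)
    (f' := fun (T : Finset ι) t => ∑ n ∈ T, f' n t) (l := (atTop : Filter (Finset ι)))
    hs ?_ ?_ ?_ ht₀
  · exact tendstoUniformlyOn_tsum hu fun n t ht => by
      rw [Real.norm_eq_abs]; exact hbound n t ht
  · exact Filter.Eventually.of_forall fun T t ht => HasDerivAt.fun_sum fun n _ => hderiv n t ht
  · exact fun t ht => (hsum t ht).hasSum

lemma hasDerivAt_nat_mul_pow (m : ℕ) (t : ℝ) :
    HasDerivAt (fun s : ℝ => (m:ℝ) * s ^ (m - 1)) ((m:ℝ) * ((m:ℝ) - 1) * t ^ (m - 2)) t := by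
  cases m with
  | zero => simpa using hasDerivAt_const t (0:ℝ)
  | succ m' =>
    have h : HasDerivAt (fun y : ℝ => ((m' + 1 : ℕ) : ℝ) * y ^ m')
        (((m' + 1 : ℕ) : ℝ) * ((m' : ℝ) * t ^ (m' - 1))) t :=
      (hasDerivAt_pow m' t).const_mul ((m' + 1 : ℕ) : ℝ)
    convert h using 1
    · simp
    rw [show m' + 1 - 2 = m' - 1 by omega]
    push_cast
    ring

lemma abs_cast_mul_sub_one_le (m : ℕ) : |(m:ℝ) * ((m:ℝ) - 1)| ≤ (m:ℝ) ^ 2 := by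
  cases m with
  | zero => simp
  | succ k =>
    have hk : (0:ℝ) ≤ (k:ℝ) := Nat.cast_nonneg k
    have h1 : (0:ℝ) ≤ ((k + 1 : ℕ):ℝ) - 1 := by push_cast; linarith
    rw [abs_of_nonneg (mul_nonneg (Nat.cast_nonneg _) h1)]
    push_cast
    nlinarith

/-! ### Series terms for the derivatives -/

noncomputable def T1 (i : Fin 4) (n : Fin 4 → ℕ) (x : Fin 4 → ℝ) : ℝ :=
  bananaA n * ((n i : ℝ) * x i ^ (n i - 1) * ∏ j ∈ Finset.univ.erase i, x j ^ n j)

noncomputable def T2 (i : Fin 4) (n : Fin 4 → ℕ) (x : Fin 4 → ℝ) : ℝ :=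
  bananaA n * ((n i : ℝ) * ((n i : ℝ) - 1) * x i ^ (n i - 2)
    * ∏ j ∈ Finset.univ.erase i, x j ^ n j)

lemma prod_update_pow (x : Fin 4 → ℝ) (i : Fin 4) (t : ℝ) (n : Fin 4 → ℕ) :
    ∏ j, Function.update x i t j ^ n j = t ^ n i * ∏ j ∈ Finset.univ.erase i, x j ^ n j := by
  calc ∏ j, Function.update x i t j ^ n j
      = ∏ j, Function.update (fun j => x j ^ n j) i (t ^ n i) j :=
        Finset.prod_congr rfl fun j _ => by
          rcases eq_or_ne j i with rfl | h
          · simp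
          · simp [Function.update_of_ne h]
    _ = _ := by
        rw [Finset.prod_update_of_mem (Finset.mem_univ i), ← Finset.erase_eq]

lemma prod_erase_update (x : Fin 4 → ℝ) (i : Fin 4) (t : ℝ) (n : Fin 4 → ℕ) :
    ∏ j ∈ Finset.univ.erase i, Function.update x i t j ^ n j
      = ∏ j ∈ Finset.univ.erase i, x j ^ n j :=
  Finset.prod_congr rfl fun j hj => by
    rw [Function.update_of_ne (Finset.mem_erase.1 hj).1]

lemma radius_facts (x : Fin 4 → ℝ) (hx : ∀ j, |x j| < 1/16) (i : Fin 4) :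
    ∃ r : ℝ, 0 < r ∧ r < 1/16 ∧ |x i| < r := by
  refine ⟨(|x i| + 1/16)/2, by positivity, ?_, ?_⟩
  · have := hx i; linarith
  · have := hx i; linarith

lemma key_deriv1 (x : Fin 4 → ℝ) (hx : ∀ j, |x j| < 1/16) (i : Fin 4) :
    HasDerivAt (fun t => psi0 (Function.update x i t)) (∑' n, T1 i n x) (x i) := by
  obtain ⟨r, hr0, hr16, hxr⟩ := radius_facts x hx i
  have hmem : x i ∈ Metric.ball (0:ℝ) r := by
    rw [Metric.mem_ball, Real.dist_eq, sub_zero]; exact hxr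
  refine hasDerivAt_tsum_of_bound
    (fun n t => bananaA n * ∏ j, Function.update x i t j ^ n j)
    (fun n t => bananaA n * ((n i : ℝ) * t ^ (n i - 1)
      * ∏ j ∈ Finset.univ.erase i, x j ^ n j))
    (fun n => (16:ℝ) ^ (∑ j, n j) *
      ((n i : ℝ) ^ 1 * r ^ (n i - 1) * ∏ j ∈ Finset.univ.erase i, |x j| ^ n j))
    Metric.isOpen_ball ?_ ?_ ?_ ?_ hmem
  · exact summable_major x hx i 1 hr0 hr16
  · intro n t _
    show HasDerivAt (fun t => bananaA n * ∏ j, Function.update x i t j ^ n j)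
      (bananaA n * ((n i : ℝ) * t ^ (n i - 1) * ∏ j ∈ Finset.univ.erase i, x j ^ n j)) t
    have hfun : (fun t => bananaA n * ∏ j, Function.update x i t j ^ n j)
        = fun t => bananaA n * (t ^ n i * ∏ j ∈ Finset.univ.erase i, x j ^ n j) :=
      funext fun t => by rw [prod_update_pow]
    rw [hfun]
    have h := ((hasDerivAt_pow (n i) t).mul_const
      (∏ j ∈ Finset.univ.erase i, x j ^ n j)).const_mul (bananaA n)
    convert h using 1
  · intro n t ht
    rw [Metric.mem_ball, Real.dist_eq, sub_zero] at ht
    simp only [abs_mul, abs_pow, Finset.abs_prod, Nat.abs_cast, pow_one]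
    gcongr <;> first
      | exact abs_bananaA_le n
      | exact ht.le
      | positivity
  · intro t ht
    rw [Metric.mem_ball, Real.dist_eq, sub_zero] at ht
    apply Summable.of_abs
    refine Summable.of_nonneg_of_le (fun n => abs_nonneg _) (fun n => ?_)
      (summable_major x hx i 0 hr0 hr16)
    simp only [prod_update_pow, abs_mul, abs_pow, Finset.abs_prod, pow_zero, one_mul,
      Nat.sub_zero]
    gcongr <;> first
      | exact abs_bananaA_le n
      | exact ht.le
      | positivity

lemma key_deriv2 (x : Fin 4 → ℝ) (hx : ∀ j, |x j| < 1/16) (i : Fin 4) :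
    HasDerivAt (fun t => ∑' n, T1 i n (Function.update x i t)) (∑' n, T2 i n x) (x i) := by
  obtain ⟨r, hr0, hr16, hxr⟩ := radius_facts x hx i
  have hmem : x i ∈ Metric.ball (0:ℝ) r := by
    rw [Metric.mem_ball, Real.dist_eq, sub_zero]; exact hxr
  have hfun : (fun t => ∑' n, T1 i n (Function.update x i t))
      = fun t => ∑' n, bananaA n * ((n i : ℝ) * t ^ (n i - 1)
          * ∏ j ∈ Finset.univ.erase i, x j ^ n j) :=
    funext fun t => tsum_congr fun n => by
      rw [T1, Function.update_self, prod_erase_update]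
  rw [hfun]
  refine hasDerivAt_tsum_of_bound
    (fun n t => bananaA n * ((n i : ℝ) * t ^ (n i - 1)
      * ∏ j ∈ Finset.univ.erase i, x j ^ n j))
    (fun n t => bananaA n * ((n i : ℝ) * ((n i : ℝ) - 1) * t ^ (n i - 2)
      * ∏ j ∈ Finset.univ.erase i, x j ^ n j))
    (fun n => (16:ℝ) ^ (∑ j, n j) *
      ((n i : ℝ) ^ 2 * r ^ (n i - 2) * ∏ j ∈ Finset.univ.erase i, |x j| ^ n j))
    Metric.isOpen_ball ?_ ?_ ?_ ?_ hmem
  · exact summable_major x hx i 2 hr0 hr16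
  · intro n t _
    have h := ((hasDerivAt_nat_mul_pow (n i) t).mul_const
      (∏ j ∈ Finset.univ.erase i, x j ^ n j)).const_mul (bananaA n)
    convert h using 1
  · intro n t ht
    rw [Metric.mem_ball, Real.dist_eq, sub_zero] at ht
    calc |bananaA n * ((n i : ℝ) * ((n i : ℝ) - 1) * t ^ (n i - 2)
          * ∏ j ∈ Finset.univ.erase i, x j ^ n j)|
        = |bananaA n| * (|(n i : ℝ) * ((n i : ℝ) - 1)| * |t| ^ (n i - 2)
          * ∏ j ∈ Finset.univ.erase i, |x j| ^ n j) := by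
          rw [abs_mul, abs_mul, abs_mul, abs_pow, Finset.abs_prod]
          simp only [abs_pow]
      _ ≤ (16:ℝ) ^ (∑ j, n j) *
          ((n i : ℝ) ^ 2 * r ^ (n i - 2) * ∏ j ∈ Finset.univ.erase i, |x j| ^ n j) := by
          gcongr <;> first
            | exact abs_bananaA_le n
            | exact abs_cast_mul_sub_one_le (n i)
            | exact ht.le
            | positivity
  · intro t ht
    rw [Metric.mem_ball, Real.dist_eq, sub_zero] at ht
    apply Summable.of_abs
    refine Summable.of_nonneg_of_le (fun n => abs_nonneg _) (fun n => ?_)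
      (summable_major x hx i 1 hr0 hr16)
    simp only [abs_mul, abs_pow, Finset.abs_prod, Nat.abs_cast, pow_one]
    gcongr <;> first
      | exact abs_bananaA_le n
      | exact ht.le
      | positivity

lemma summable_T1 (y : Fin 4 → ℝ) (hy : ∀ j, |y j| < 1/16) (i : Fin 4) :
    Summable fun n => T1 i n y := by
  obtain ⟨r, hr0, hr16, hxr⟩ := radius_facts y hy i
  apply Summable.of_abs
  refine Summable.of_nonneg_of_le (fun n => abs_nonneg _) (fun n => ?_)
    (summable_major y hy i 1 hr0 hr16)
  rw [T1]
  simp only [abs_mul, abs_pow, Finset.abs_prod, Nat.abs_cast, pow_one]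
  gcongr <;> first
    | exact abs_bananaA_le n
    | exact hxr.le
    | positivity

lemma summable_T2 (y : Fin 4 → ℝ) (hy : ∀ j, |y j| < 1/16) (i : Fin 4) :
    Summable fun n => T2 i n y := by
  obtain ⟨r, hr0, hr16, hxr⟩ := radius_facts y hy i
  apply Summable.of_abs
  refine Summable.of_nonneg_of_le (fun n => abs_nonneg _) (fun n => ?_)
    (summable_major y hy i 2 hr0 hr16)
  rw [T2]
  calc |bananaA n * ((n i : ℝ) * ((n i : ℝ) - 1) * y i ^ (n i - 2)
        * ∏ j ∈ Finset.univ.erase i, y j ^ n j)|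
      = |bananaA n| * (|(n i : ℝ) * ((n i : ℝ) - 1)| * |y i| ^ (n i - 2)
        * ∏ j ∈ Finset.univ.erase i, |y j| ^ n j) := by
        rw [abs_mul, abs_mul, abs_mul, abs_pow, Finset.abs_prod]
        simp only [abs_pow]
    _ ≤ (16:ℝ) ^ (∑ j, n j) *
        ((n i : ℝ) ^ 2 * r ^ (n i - 2) * ∏ j ∈ Finset.univ.erase i, |y j| ^ n j) := by
        gcongr <;> first
          | exact abs_bananaA_le n
          | exact abs_cast_mul_sub_one_le (n i)
          | exact hxr.le
          | positivity

/-! ### The partial derivatives of `psi0` -/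

lemma pderiv1_eq (x : Fin 4 → ℝ) (hx : ∀ j, |x j| < 1/16) (i : Fin 4) :
    pderiv i psi0 x = ∑' n, T1 i n x :=
  (key_deriv1 x hx i).deriv

lemma pderiv2_eq (y : Fin 4 → ℝ) (hy : ∀ j, |y j| < 1/16) (i : Fin 4) :
    pderiv i (pderiv i psi0) y = ∑' n, T2 i n y := by
  have hopen : IsOpen {t : ℝ | |t| < 1/16} := isOpen_lt continuous_abs continuous_const
  have hev : (fun t => pderiv i psi0 (Function.update y i t))
      =ᶠ[nhds (y i)] fun t => ∑' n, T1 i n (Function.update y i t) := by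
    filter_upwards [hopen.mem_nhds (hy i)] with t ht
    have hbox : ∀ j, |Function.update y i t j| < 1/16 := fun j => by
      rcases eq_or_ne j i with rfl | h
      · simpa using ht
      · simpa [Function.update_of_ne h] using hy j
    exact pderiv1_eq (Function.update y i t) hbox i
  show deriv (fun t => pderiv i psi0 (Function.update y i t)) (y i) = _
  rw [hev.deriv_eq]
  exact (key_deriv2 y hy i).deriv

/-! ### Reindexing -/

lemma bananaA_succ (m : Fin 4 → ℕ) (i : Fin 4) :
    bananaA (Function.update m i (m i + 1)) * ((m i : ℝ) + 1) ^ 2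
      = -((∑ j, m j : ℕ) + 1 : ℝ) ^ 2 * bananaA m := by
  have hsum : ∑ j, Function.update m i (m i + 1) j = (∑ j, m j) + 1 := by
    rw [Finset.sum_update_of_mem (Finset.mem_univ i), ← Finset.erase_eq,
      ← Finset.add_sum_erase Finset.univ m (Finset.mem_univ i)]
    omega
  have hprod : ∏ j, ((Function.update m i (m i + 1) j).factorial : ℝ)
      = ((m i : ℝ) + 1) * ∏ j, ((m j).factorial : ℝ) := by
    calc ∏ j, ((Function.update m i (m i + 1) j).factorial : ℝ)
        = ∏ j, Function.update (fun j => ((m j).factorial : ℝ)) i ((m i + 1).factorial : ℝ) j :=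
          Finset.prod_congr rfl fun j _ => by
            rcases eq_or_ne j i with rfl | h
            · simp
            · simp [Function.update_of_ne h]
      _ = ((m i + 1).factorial : ℝ) * ∏ j ∈ Finset.univ.erase i, ((m j).factorial : ℝ) := by
          rw [Finset.prod_update_of_mem (Finset.mem_univ i), ← Finset.erase_eq]
      _ = ((m i : ℝ) + 1) * ∏ j, ((m j).factorial : ℝ) := by
          rw [Nat.factorial_succ,
            ← Finset.mul_prod_erase Finset.univ (fun j => ((m j).factorial : ℝ))
              (Finset.mem_univ i)]
          push_cast
          ring
  have hP : (0:ℝ) < ∏ j, ((m j).factorial : ℝ) :=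
    Finset.prod_pos fun j _ => by exact_mod_cast (m j).factorial_pos
  have hc1 : ((m i : ℝ) + 1) ≠ 0 := by positivity
  rw [bananaA, bananaA, hsum, hprod]
  rw [Nat.factorial_succ]
  rw [pow_succ (-1:ℝ) (∑ j, m j)]
  push_cast
  field_simp

lemma tsum_F_eq (y : Fin 4 → ℝ) (i : Fin 4) :
    (∑' n : Fin 4 → ℕ, bananaA n * ((n i : ℝ) ^ 2 * y i ^ (n i - 1)
        * ∏ j ∈ Finset.univ.erase i, y j ^ n j))
      = ∑' m : Fin 4 → ℕ, (-((∑ j, m j : ℕ) + 1 : ℝ) ^ 2 * bananaA m) * ∏ j, y j ^ m j := by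
  have hinj : Function.Injective
      (fun m : Fin 4 → ℕ => Function.update m i (m i + 1)) := by
    intro m m' h
    funext j
    rcases eq_or_ne j i with rfl | hj
    · have := congrFun h j
      simpa using this
    · have := congrFun h j
      simpa [Function.update_of_ne hj] using this
  have hsupp : Function.support (fun n : Fin 4 → ℕ => bananaA n * ((n i : ℝ) ^ 2
      * y i ^ (n i - 1) * ∏ j ∈ Finset.univ.erase i, y j ^ n j))
      ⊆ Set.range (fun m : Fin 4 → ℕ => Function.update m i (m i + 1)) := by
    intro n hn
    have hni : n i ≠ 0 := by
      intro h0
      apply hn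
      simp [h0]
    refine ⟨Function.update n i (n i - 1), ?_⟩
    funext j
    rcases eq_or_ne j i with rfl | hj
    · simp [Function.update_self]
      omega
    · simp [Function.update_of_ne hj]
  have := (hinj.tsum_eq hsupp).symm
  rw [this]
  refine tsum_congr fun m => ?_
  have h1 : Function.update m i (m i + 1) i = m i + 1 := Function.update_self _ _ _
  have h2 : ∏ j ∈ Finset.univ.erase i, y j ^ Function.update m i (m i + 1) j
      = ∏ j ∈ Finset.univ.erase i, y j ^ m j :=
    Finset.prod_congr rfl fun j hj => by
      rw [Function.update_of_ne (Finset.mem_erase.1 hj).1]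
  have h3 : ∏ j, y j ^ m j = y i ^ m i * ∏ j ∈ Finset.univ.erase i, y j ^ m j :=
    (Finset.mul_prod_erase Finset.univ _ (Finset.mem_univ i)).symm
  calc bananaA (Function.update m i (m i + 1))
        * ((Function.update m i (m i + 1) i : ℝ) ^ 2
          * y i ^ (Function.update m i (m i + 1) i - 1)
          * ∏ j ∈ Finset.univ.erase i, y j ^ Function.update m i (m i + 1) j)
      = (bananaA (Function.update m i (m i + 1)) * ((m i : ℝ) + 1) ^ 2)
          * (y i ^ m i * ∏ j ∈ Finset.univ.erase i, y j ^ m j) := by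
        rw [h1, h2]
        push_cast
        ring_nf
      _ = (-((∑ j, m j : ℕ) + 1 : ℝ) ^ 2 * bananaA m) * ∏ j, y j ^ m j := by
        rw [bananaA_succ, h3]

/-! ### The key identity -/

noncomputable def Sval (y : Fin 4 → ℝ) : ℝ :=
  ∑' m : Fin 4 → ℕ, (-((∑ j, m j : ℕ) + 1 : ℝ) ^ 2 * bananaA m) * ∏ j, y j ^ m j

lemma pow_identity (m : ℕ) (t a C : ℝ) :
    t * (a * ((m:ℝ) * ((m:ℝ) - 1) * t ^ (m - 2) * C)) + a * ((m:ℝ) * t ^ (m - 1) * C)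
      = a * ((m:ℝ) ^ 2 * t ^ (m - 1) * C) := by
  match m with
  | 0 => push_cast; ring_nf
  | 1 => push_cast; ring_nf
  | (k+2) =>
    have h1 : (k + 2) - 1 = k + 1 := rfl
    have h2 : (k + 2) - 2 = k := rfl
    rw [h1, h2, pow_succ]
    push_cast
    ring

lemma key_identity (y : Fin 4 → ℝ) (hy : ∀ j, |y j| < 1/16) (i : Fin 4) :
    y i * pderiv i (pderiv i psi0) y + pderiv i psi0 y = Sval y := by
  rw [pderiv1_eq y hy i, pderiv2_eq y hy i, ← tsum_mul_left,
    ← Summable.tsum_add ((summable_T2 y hy i).mul_left (y i)) (summable_T1 y hy i)]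
  rw [Sval, ← tsum_F_eq y i]
  refine tsum_congr fun n => ?_
  rw [T1, T2]
  exact pow_identity (n i) (y i) (bananaA n) (∏ j ∈ Finset.univ.erase i, y j ^ n j)

end BananaAux

/-- The holomorphic period satisfies the explicit differential system:
for `|yᵢ| < 1/16` and each `i`,
`yᵢ ∂²ψ₀/∂yᵢ² = -ψ₀ - (2yᵢ+1)∂ψ₀/∂yᵢ - 2 ∑_{k≠i} y_k ∂ψ₀/∂y_k - 16 R(y)`. -/
theorem psi0_differential_system (y : Fin 4 → ℝ) (hy : ∀ i, |y i| < 1 / 16) (i : Fin 4) :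
    y i * pderiv i (pderiv i psi0) y
      = -psi0 y - (2 * y i + 1) * pderiv i psi0 y
        - 2 * ∑ k ∈ Finset.univ.erase i, y k * pderiv k psi0 y
        - 16 * Rm2F5 y := by
  have h : ∀ k : Fin 4, y k * pderiv k (pderiv k psi0) y + pderiv k psi0 y = BananaAux.Sval y :=
    fun k => BananaAux.key_identity y hy k
  have hsum4 : ∑ j, (y j * pderiv j (pderiv j psi0) y + (8 * y j + 1) * pderiv j psi0 y + psi0 y)
      = 4 * BananaAux.Sval y + 4 * psi0 y + 8 * ∑ j, y j * pderiv j psi0 y := by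
    have hterm : ∀ j : Fin 4,
        y j * pderiv j (pderiv j psi0) y + (8 * y j + 1) * pderiv j psi0 y + psi0 y
          = BananaAux.Sval y + 8 * (y j * pderiv j psi0 y) + psi0 y := fun j => by
      linear_combination h j
    rw [Finset.sum_congr rfl fun j _ => hterm j]
    rw [Finset.sum_add_distrib, Finset.sum_add_distrib, ← Finset.mul_sum]
    simp [Finset.sum_const, Finset.card_univ]
    ring
  have herase : ∑ k ∈ Finset.univ.erase i, y k * pderiv k psi0 y
      = (∑ j, y j * pderiv j psi0 y) - y i * pderiv i psi0 y := by
    rw [← Finset.add_sum_erase Finset.univ _ (Finset.mem_univ i)]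
    ring
  unfold Rm2F5
  rw [hsum4, herase]
  linear_combination h i
end

section
/- Let U ⊆ {y ∈ ℝ⁴ : y₁ y₂ y₃ y₄ ≠ 0} be open, let ψ : U → ℝ be twice continuously differentiable and R : U → ℝ a function, and suppose that for each i ∈ {1,2,3,4} the equation y_i ∂²ψ/∂y_i² = −ψ − (2 y_i + 1) ∂ψ/∂y_i − 2 Σ_{k ≠ i} y_k ∂ψ/∂y_k − 16 R holds on U. Then on U: (a) R = −(1/64) Σ_{i=1}^{4} ( y_i ∂²ψ/∂y_i² + (8 y_i + 1) ∂ψ/∂y_i + ψ ); and (b) for all i, j ∈ {1,2,3,4}: y_i ∂²ψ/∂y_i² + ∂ψ/∂y_i = y_j ∂²ψ/∂y_j² + ∂ψ/∂y_j, so that R can be eliminated and ψ alone satisfies the symmetric second-order Picard–Fuchs relations. -/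
open Finset

section PicardFuchsAlgebra

variable {ι K : Type*} [Fintype ι] [Field K] (x d s : ι → K) (p r : K)

theorem mul_add_eq_of_eq_sum_erase [DecidableEq ι] (i : ι)
    (h : x i * s i = -p - (2 * x i + 1) * d i - 2 * ∑ k ∈ univ.erase i, x k * d k - 16 * r) :
    x i * s i + d i = -p - 2 * ∑ k, x k * d k - 16 * r := by
  rw [sum_erase_eq_sub (mem_univ i)] at h
  linear_combination h

theorem eq_of_forall_mul_add_eq [CharZero K] [Nonempty ι]
    (h : ∀ i, x i * s i + d i = -p - 2 * ∑ k, x k * d k - 16 * r) :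
    r = -(1 / (16 * Fintype.card ι)) *
      ∑ i, (x i * s i + (2 * Fintype.card ι * x i + 1) * d i + p) := by
  have hcard : (Fintype.card ι : K) ≠ 0 := Nat.cast_ne_zero.mpr Fintype.card_ne_zero
  have hsum : ∑ i, (x i * s i + d i) = Fintype.card ι * (-p - 2 * ∑ k, x k * d k - 16 * r) := by
    rw [sum_congr rfl fun i _ => h i, sum_const, card_univ, nsmul_eq_mul]
  have hexpand : ∑ i, (x i * s i + (2 * Fintype.card ι * x i + 1) * d i + p)
      = ∑ i, (x i * s i + d i) + 2 * Fintype.card ι * ∑ k, x k * d k + Fintype.card ι * p := by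
    simp only [sum_add_distrib, mul_sum, sum_const, card_univ, nsmul_eq_mul, add_mul, one_mul,
      mul_assoc]
    ring
  rw [hexpand, hsum]
  field_simp
  ring

end PicardFuchsAlgebra

theorem eliminate_R_from_system_general (U : Set (Fin 4 → ℝ))
    (ψ R : (Fin 4 → ℝ) → ℝ)
    (heq : ∀ y ∈ U, ∀ i : Fin 4,
      y i * pderiv i (pderiv i ψ) y
        = -ψ y - (2 * y i + 1) * pderiv i ψ y
          - 2 * ∑ k ∈ Finset.univ.erase i, y k * pderiv k ψ y - 16 * R y) :
    (∀ y ∈ U, R y = -(1 / 64) * ∑ i, (y i * pderiv i (pderiv i ψ) y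
        + (8 * y i + 1) * pderiv i ψ y + ψ y)) ∧
    (∀ y ∈ U, ∀ i j : Fin 4,
      y i * pderiv i (pderiv i ψ) y + pderiv i ψ y
        = y j * pderiv j (pderiv j ψ) y + pderiv j ψ y) := by
  have hsys : ∀ y ∈ U, ∀ i : Fin 4, y i * pderiv i (pderiv i ψ) y + pderiv i ψ y
      = -ψ y - 2 * ∑ k, y k * pderiv k ψ y - 16 * R y := fun y hy i =>
    mul_add_eq_of_eq_sum_erase y (pderiv · ψ y) (fun k => pderiv k (pderiv k ψ) y) (ψ y) (R y) i
      (heq y hy i)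
  refine ⟨fun y hy => ?_, fun y hy i j => by rw [hsys y hy i, hsys y hy j]⟩
  have hR := eq_of_forall_mul_add_eq y (pderiv · ψ y) (fun k => pderiv k (pderiv k ψ) y) (ψ y) (R y)
    (hsys y hy)
  norm_num at hR
  linear_combination hR

/-- If `ψ` is a twice continuously differentiable function on an open set
`U ⊆ {y : y₁y₂y₃y₄ ≠ 0}` satisfying, for each `i`,
`yᵢ ∂²ψ/∂yᵢ² = -ψ - (2yᵢ+1)∂ψ/∂yᵢ - 2∑_{k≠i} y_k ∂ψ/∂y_k - 16 R`, then on `U`: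
(a) `R = -(1/64) ∑ᵢ ( yᵢ ∂²ψ/∂yᵢ² + (8yᵢ+1)∂ψ/∂yᵢ + ψ )`, and
(b) `yᵢ ∂²ψ/∂yᵢ² + ∂ψ/∂yᵢ = y_j ∂²ψ/∂y_j² + ∂ψ/∂y_j` for all `i, j`, so that `R` can be
eliminated and `ψ` alone satisfies the symmetric second-order Picard–Fuchs relations. -/
theorem eliminate_R_from_system (U : Set (Fin 4 → ℝ)) (hUopen : IsOpen U)
    (hUne : ∀ y ∈ U, y 0 * y 1 * y 2 * y 3 ≠ 0)
    (ψ R : (Fin 4 → ℝ) → ℝ) (hψ : ContDiffOn ℝ 2 ψ U)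
    (heq : ∀ y ∈ U, ∀ i : Fin 4,
      y i * pderiv i (pderiv i ψ) y
        = -ψ y - (2 * y i + 1) * pderiv i ψ y
          - 2 * ∑ k ∈ Finset.univ.erase i, y k * pderiv k ψ y - 16 * R y) :
    (∀ y ∈ U, R y = -(1 / 64) * ∑ i, (y i * pderiv i (pderiv i ψ) y
        + (8 * y i + 1) * pderiv i ψ y + ψ y)) ∧
    (∀ y ∈ U, ∀ i j : Fin 4,
      y i * pderiv i (pderiv i ψ) y + pderiv i ψ y
        = y j * pderiv j (pderiv j ψ) y + pderiv j ψ y) :=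
  eliminate_R_from_system_general U ψ R heq
end

section
/- Let S be a commutative ring and δ : S → S a derivation, extended entrywise to matrices over S and to the Laurent polynomial ring S[ε, ε⁻¹] by δ(ε) = 0. Let A(ε) be a filtration-compatible connection matrix with block sizes d₁, d₂, d₃. Suppose R⁰₁₁, R⁰₂₂, R⁰₃₃ are invertible matrices over S of sizes d₁, d₂, d₃, and R⁻¹₂₁ (size d₂×d₁), R⁻²₃₁ (size d₃×d₁), R⁻¹₃₂ (size d₃×d₂) are matrices over S, satisfying the six equations: δR⁰₁₁ = A⁰₁₁ R⁰₁₁ + A¹₁₂ R⁻¹₂₁; δR⁻¹₂₁ = A⁻¹₂₁ R⁰₁₁ + A⁰₂₂ R⁻¹₂₁ + A¹₂₃ R⁻²₃₁; δR⁻²₃₁ = A⁻²₃₁ R⁰₁₁ + A⁻¹₃₂ R⁻¹₂₁ + A⁰₃₃ R⁻²₃₁; δR⁰₂₂ = A⁰₂₂ R⁰₂₂ + A¹₂₃ R⁻¹₃₂ − R⁻¹₂₁ (R⁰₁₁)⁻¹ A¹₁₂ R⁰₂₂; δR⁻¹₃₂ = A⁻¹₃₂ R⁰₂₂ + A⁰₃₃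 R⁻¹₃₂ − R⁻²₃₁ (R⁰₁₁)⁻¹ A¹₁₂ R⁰₂₂; δR⁰₃₃ = A⁰₃₃ R⁰₃₃ − R⁻¹₃₂ (R⁰₂₂)⁻¹ A¹₂₃ R⁰₃₃. Let R(ε) be the block matrix [[R⁰₁₁, 0, 0], [ε⁻¹ R⁻¹₂₁, R⁰₂₂, 0], [ε⁻² R⁻²₃₁, ε⁻¹ R⁻¹₃₂, R⁰₃₃]]. Then in the gauge transform Ã = R(ε)⁻¹ A(ε) R(ε) − R(ε)⁻¹ δR(ε), the following Laurent coefficients vanish (the terms of B-order −2): the ε⁰-coefficient of block (1,1), the ε⁻¹-coefficient of block (2,1), the ε⁻²-coefficient of block (3,1), the ε⁰-coefficient of block (2,2), the ε⁻¹-coefficient of block (3,2), and the ε⁰-coefficient of block (3,3). -/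
open LaurentPolynomial

/-- The coefficient of `ε^k` in a Laurent polynomial in `ε`. -/
noncomputable def lcoeff {S : Type*} [Semiring S] (p : LaurentPolynomial S) (k : ℤ) : S :=
  (AddMonoidAlgebra.coeff p : ℤ →₀ S) k

/-- The entrywise extension of a derivation `δ : S → S` to the Laurent polynomial ring
`S[ε, ε⁻¹]`, determined by `δ(ε) = 0`: it acts on each coefficient. -/
noncomputable def lder {S : Type*} [Semiring S] (δ : S → S) (h0 : δ 0 = 0)
    (p : LaurentPolynomial S) : LaurentPolynomial S :=
  AddMonoidAlgebra.ofCoeff (Finsupp.mapRange δ h0 (AddMonoidAlgebra.coeff p : ℤ →₀ S))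

/-- The matrix `ε^k M` over the Laurent polynomial ring. -/
noncomputable def lmat {S : Type*} [CommSemiring S] {m n : Type*} (k : ℤ)
    (M : Matrix m n S) : Matrix m n (LaurentPolynomial S) :=
  M.map fun a => T k * C a

/-- A 3×3 block matrix from its nine blocks. -/
def blk3 {S : Type*} {d₁ d₂ d₃ : ℕ}
    (M11 : Matrix (Fin d₁) (Fin d₁) S) (M12 : Matrix (Fin d₁) (Fin d₂) S)
    (M13 : Matrix (Fin d₁) (Fin d₃) S)
    (M21 : Matrix (Fin d₂) (Fin d₁) S) (M22 : Matrix (Fin d₂) (Fin d₂) S)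
    (M23 : Matrix (Fin d₂) (Fin d₃) S)
    (M31 : Matrix (Fin d₃) (Fin d₁) S) (M32 : Matrix (Fin d₃) (Fin d₂) S)
    (M33 : Matrix (Fin d₃) (Fin d₃) S) :
    Matrix (Fin d₁ ⊕ (Fin d₂ ⊕ Fin d₃)) (Fin d₁ ⊕ (Fin d₂ ⊕ Fin d₃)) S :=
  Matrix.of fun i j =>
    match i, j with
    | .inl a, .inl b => M11 a b
    | .inl a, .inr (.inl b) => M12 a b
    | .inl a, .inr (.inr b) => M13 a b
    | .inr (.inl a), .inl b => M21 a b
    | .inr (.inl a), .inr (.inl b) => M22 a b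
    | .inr (.inl a), .inr (.inr b) => M23 a b
    | .inr (.inr a), .inl b => M31 a b
    | .inr (.inr a), .inr (.inl b) => M32 a b
    | .inr (.inr a), .inr (.inr b) => M33 a b

/-- The filtration-compatible connection matrix
`A(ε) = [[A⁰₁₁+εA¹₁₁, εA¹₁₂, 0],
[ε⁻¹A⁻¹₂₁+A⁰₂₁+εA¹₂₁, A⁰₂₂+εA¹₂₂, εA¹₂₃],
[ε⁻²A⁻²₃₁+ε⁻¹A⁻¹₃₁+A⁰₃₁+εA¹₃₁, ε⁻¹A⁻¹₃₂+A⁰₃₂+εA¹₃₂, A⁰₃₃+εA¹₃₃]]`. -/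
noncomputable def connMat {S : Type*} [CommRing S] {d₁ d₂ d₃ : ℕ}
    (A011 A111 : Matrix (Fin d₁) (Fin d₁) S) (A112 : Matrix (Fin d₁) (Fin d₂) S)
    (Am121 A021 A121 : Matrix (Fin d₂) (Fin d₁) S)
    (A022 A122 : Matrix (Fin d₂) (Fin d₂) S) (A123 : Matrix (Fin d₂) (Fin d₃) S)
    (Am231 Am131 A031 A131 : Matrix (Fin d₃) (Fin d₁) S)
    (Am132 A032 A132 : Matrix (Fin d₃) (Fin d₂) S)
    (A033 A133 : Matrix (Fin d₃) (Fin d₃) S) :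
    Matrix (Fin d₁ ⊕ (Fin d₂ ⊕ Fin d₃)) (Fin d₁ ⊕ (Fin d₂ ⊕ Fin d₃))
      (LaurentPolynomial S) :=
  blk3 (lmat 0 A011 + lmat 1 A111) (lmat 1 A112) 0
    (lmat (-1) Am121 + lmat 0 A021 + lmat 1 A121) (lmat 0 A022 + lmat 1 A122) (lmat 1 A123)
    (lmat (-2) Am231 + lmat (-1) Am131 + lmat 0 A031 + lmat 1 A131)
    (lmat (-1) Am132 + lmat 0 A032 + lmat 1 A132) (lmat 0 A033 + lmat 1 A133)

/-- The gauge transform `Ã = R⁻¹ A R - R⁻¹ δR`. -/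
noncomputable def gaugeTransform {S : Type*} [CommRing S] {ι : Type*} [Fintype ι]
    [DecidableEq ι] (δ : S → S) (h0 : δ 0 = 0)
    (A R : Matrix ι ι (LaurentPolynomial S)) : Matrix ι ι (LaurentPolynomial S) :=
  R⁻¹ * A * R - R⁻¹ * R.map (lder δ h0)


/-! ### Auxiliary lemmas -/

section AuxLemmas
variable {S : Type*} [CommRing S] {m n p : Type*}

lemma lcoeff_single (k : ℤ) (a : S) (l : ℤ) :
    lcoeff (AddMonoidAlgebra.single k a : LaurentPolynomial S) l = if k = l then a else 0 := by
  simp only [lcoeff, AddMonoidAlgebra.coeff_single]; exact Finsupp.single_apply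

lemma lcoeff_CT (k : ℤ) (a : S) (l : ℤ) :
    lcoeff (C a * T k) l = if k = l then a else 0 := by
  rw [← single_eq_C_mul_T]; exact lcoeff_single k a l

lemma lder_CT (δ : S → S) (h0 : δ 0 = 0) (k : ℤ) (a : S) :
    lder δ h0 (C a * T k) = C (δ a) * T k := by
  rw [← single_eq_C_mul_T, ← single_eq_C_mul_T]
  rw [lder, AddMonoidAlgebra.coeff_single]
  rw [Finsupp.mapRange_single, AddMonoidAlgebra.ofCoeff_single]

lemma lder_zero' (δ : S → S) (h0 : δ 0 = 0) :
    lder δ h0 (0 : LaurentPolynomial S) = 0 := by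
  rw [lder, AddMonoidAlgebra.coeff_zero, Finsupp.mapRange_zero]
  exact AddMonoidAlgebra.ofCoeff_zero

lemma map_zero_lder (δ : S → S) (h0 : δ 0 = 0) :
    (0 : Matrix m n (LaurentPolynomial S)).map (lder δ h0) = 0 := by
  ext i j
  simp [Matrix.map_apply, lder_zero' δ h0]

lemma lmat_apply (k : ℤ) (M : Matrix m n S) (i : m) (j : n) :
    lmat k M i j = C (M i j) * T k := by
  simp only [lmat, Matrix.map_apply]
  exact mul_comm _ _

lemma lmat_add (k : ℤ) (M N : Matrix m n S) : lmat k (M + N) = lmat k M + lmat k N := by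
  ext i j
  simp only [lmat_apply, Matrix.add_apply, map_add, add_mul]

lemma lmat_sub (k : ℤ) (M N : Matrix m n S) : lmat k (M - N) = lmat k M - lmat k N := by
  ext i j
  simp only [lmat_apply, Matrix.sub_apply, map_sub, sub_mul]

lemma lmat_zero (k : ℤ) : lmat k (0 : Matrix m n S) = 0 := by
  ext i j; simp [lmat]

lemma lmat_one [Fintype n] [DecidableEq n] : lmat 0 (1 : Matrix n n S) = 1 := by
  ext i j
  by_cases h : i = j <;> simp [lmat_apply, Matrix.one_apply, h, T_zero]

lemma lmat_eq_smul (k : ℤ) (M : Matrix m n S) :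
    lmat k M = (T k : LaurentPolynomial S) • M.map (C : S →+* LaurentPolynomial S) := by
  ext i j
  simp [lmat, Matrix.smul_apply, smul_eq_mul]

lemma lmat_mul [Fintype n] (k l : ℤ) (M : Matrix m n S) (N : Matrix n p S) :
    lmat k M * lmat l N = lmat (k + l) (M * N) := by
  rw [lmat_eq_smul, lmat_eq_smul, lmat_eq_smul, Matrix.map_mul, Matrix.smul_mul,
    Matrix.mul_smul, smul_smul, ← T_add]

lemma lmat_map_lder (δ : S → S) (h0 : δ 0 = 0) (k : ℤ) (M : Matrix m n S) :
    (lmat k M).map (lder δ h0) = lmat k (M.map δ) := by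
  ext i j
  simp only [Matrix.map_apply, lmat_apply, lder_CT]

lemma lcoeff_lmat (k : ℤ) (M : Matrix m n S) (i : m) (j : n) (l : ℤ) :
    lcoeff (lmat k M i j) l = if k = l then M i j else 0 := by
  rw [lmat_apply]; exact lcoeff_CT k (M i j) l

lemma lcoeff_add (p q : LaurentPolynomial S) (k : ℤ) :
    lcoeff (p + q) k = lcoeff p k + lcoeff q k := by
  simp only [lcoeff, AddMonoidAlgebra.coeff_add, Finsupp.add_apply]

lemma lcoeff_zero (k : ℤ) : lcoeff (0 : LaurentPolynomial S) k = 0 := by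
  simp only [lcoeff, AddMonoidAlgebra.coeff_zero, Finsupp.zero_apply]

end AuxLemmas

section BlkLemmas
variable {S : Type*} [CommRing S] {d₁ d₂ d₃ : ℕ}
  (A11 B11 : Matrix (Fin d₁) (Fin d₁) S) (A12 B12 : Matrix (Fin d₁) (Fin d₂) S)
  (A13 B13 : Matrix (Fin d₁) (Fin d₃) S)
  (A21 B21 : Matrix (Fin d₂) (Fin d₁) S) (A22 B22 : Matrix (Fin d₂) (Fin d₂) S)
  (A23 B23 : Matrix (Fin d₂) (Fin d₃) S)
  (A31 B31 : Matrix (Fin d₃) (Fin d₁) S) (A32 B32 : Matrix (Fin d₃) (Fin d₂) S)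
  (A33 B33 : Matrix (Fin d₃) (Fin d₃) S)

lemma blk3_mul :
    blk3 A11 A12 A13 A21 A22 A23 A31 A32 A33 * blk3 B11 B12 B13 B21 B22 B23 B31 B32 B33 =
    blk3 (A11*B11 + A12*B21 + A13*B31) (A11*B12 + A12*B22 + A13*B32) (A11*B13 + A12*B23 + A13*B33)
      (A21*B11 + A22*B21 + A23*B31) (A21*B12 + A22*B22 + A23*B32) (A21*B13 + A22*B23 + A23*B33)
      (A31*B11 + A32*B21 + A33*B31) (A31*B12 + A32*B22 + A33*B32) (A31*B13 + A32*B23 + A33*B33) := by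
  ext i j
  rcases i with a | a | a <;> rcases j with b | b | b <;>
    simp [blk3, Matrix.mul_apply, Fintype.sum_sum_type, Matrix.add_apply, add_assoc]

lemma blk3_sub :
    blk3 A11 A12 A13 A21 A22 A23 A31 A32 A33 - blk3 B11 B12 B13 B21 B22 B23 B31 B32 B33 =
    blk3 (A11-B11) (A12-B12) (A13-B13) (A21-B21) (A22-B22) (A23-B23)
      (A31-B31) (A32-B32) (A33-B33) := by
  ext i j
  rcases i with a | a | a <;> rcases j with b | b | b <;> simp [blk3]

lemma blk3_one :
    blk3 (1 : Matrix (Fin d₁) (Fin d₁) S) 0 0 0 (1 : Matrix (Fin d₂) (Fin d₂) S) 0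
    0 0 (1 : Matrix (Fin d₃) (Fin d₃) S) = 1 := by
  ext i j
  rcases i with a | a | a <;> rcases j with b | b | b <;>
    simp [blk3, Matrix.one_apply, Sum.inl.injEq, Sum.inr.injEq]

lemma blk3_map {γ : Type*} (f : S → γ) :
    (blk3 A11 A12 A13 A21 A22 A23 A31 A32 A33).map f =
    blk3 (A11.map f) (A12.map f) (A13.map f) (A21.map f) (A22.map f) (A23.map f)
      (A31.map f) (A32.map f) (A33.map f) := by
  ext i j
  rcases i with a | a | a <;> rcases j with b | b | b <;> simp [blk3]

lemma blk3_congr (h11 : A11 = B11) (h12 : A12 = B12) (h13 : A13 = B13)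
    (h21 : A21 = B21) (h22 : A22 = B22) (h23 : A23 = B23)
    (h31 : A31 = B31) (h32 : A32 = B32) (h33 : A33 = B33) :
    blk3 A11 A12 A13 A21 A22 A23 A31 A32 A33 = blk3 B11 B12 B13 B21 B22 B23 B31 B32 B33 := by
  rw [h11, h12, h13, h21, h22, h23, h31, h32, h33]

end BlkLemmas

/-- The first rotation step: if the matrices `R⁰₁₁, R⁰₂₂, R⁰₃₃` (invertible),
`R⁻¹₂₁, R⁻²₃₁, R⁻¹₃₂` satisfy the six differential equations, then
in the gauge transform of `A(ε)` by
`R(ε) = [[R⁰₁₁,0,0],[ε⁻¹R⁻¹₂₁,R⁰₂₂,0],[ε⁻²R⁻²₃₁,ε⁻¹R⁻¹₃₂,R⁰₃₃]]`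
the terms of B-order `-2` vanish: the `ε⁰`-coefficient of block (1,1), the
`ε⁻¹`-coefficient of block (2,1), the `ε⁻²`-coefficient of block (3,1), the
`ε⁰`-coefficient of block (2,2), the `ε⁻¹`-coefficient of block (3,2) and the
`ε⁰`-coefficient of block (3,3). -/
theorem rotation_step1_removes_Border_minus2
    {S : Type*} [CommRing S] (δ : S → S) (hδ0 : δ 0 = 0)
    (hδadd : ∀ a b, δ (a + b) = δ a + δ b)
    (hδmul : ∀ a b, δ (a * b) = δ a * b + a * δ b)
    {d₁ d₂ d₃ : ℕ}
    (A011 A111 : Matrix (Fin d₁) (Fin d₁) S) (A112 : Matrix (Fin d₁) (Fin d₂) S)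
    (Am121 A021 A121 : Matrix (Fin d₂) (Fin d₁) S)
    (A022 A122 : Matrix (Fin d₂) (Fin d₂) S) (A123 : Matrix (Fin d₂) (Fin d₃) S)
    (Am231 Am131 A031 A131 : Matrix (Fin d₃) (Fin d₁) S)
    (Am132 A032 A132 : Matrix (Fin d₃) (Fin d₂) S)
    (A033 A133 : Matrix (Fin d₃) (Fin d₃) S)
    (R011 : Matrix (Fin d₁) (Fin d₁) S) (hR011 : IsUnit R011.det)
    (R022 : Matrix (Fin d₂) (Fin d₂) S) (hR022 : IsUnit R022.det)
    (R033 : Matrix (Fin d₃) (Fin d₃) S) (hR033 : IsUnit R033.det)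
    (Rm121 : Matrix (Fin d₂) (Fin d₁) S) (Rm231 : Matrix (Fin d₃) (Fin d₁) S)
    (Rm132 : Matrix (Fin d₃) (Fin d₂) S)
    (heq1 : R011.map δ = A011 * R011 + A112 * Rm121)
    (heq2 : Rm121.map δ = Am121 * R011 + A022 * Rm121 + A123 * Rm231)
    (heq3 : Rm231.map δ = Am231 * R011 + Am132 * Rm121 + A033 * Rm231)
    (heq4 : R022.map δ = A022 * R022 + A123 * Rm132 - Rm121 * R011⁻¹ * A112 * R022)
    (heq5 : Rm132.map δ = Am132 * R022 + A033 * Rm132 - Rm231 * R011⁻¹ * A112 * R022)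
    (heq6 : R033.map δ = A033 * R033 - Rm132 * R022⁻¹ * A123 * R033) :
    let Aε := connMat A011 A111 A112 Am121 A021 A121 A022 A122 A123
      Am231 Am131 A031 A131 Am132 A032 A132 A033 A133
    let Rε := blk3 (lmat 0 R011) 0 0
      (lmat (-1) Rm121) (lmat 0 R022) 0
      (lmat (-2) Rm231) (lmat (-1) Rm132) (lmat 0 R033)
    let Atil := gaugeTransform δ hδ0 Aε Rε
    (∀ a b, lcoeff (Atil (Sum.inl a) (Sum.inl b)) 0 = 0) ∧
    (∀ a b, lcoeff (Atil (Sum.inr (Sum.inl a)) (Sum.inl b)) (-1) = 0) ∧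
    (∀ a b, lcoeff (Atil (Sum.inr (Sum.inr a)) (Sum.inl b)) (-2) = 0) ∧
    (∀ a b, lcoeff (Atil (Sum.inr (Sum.inl a)) (Sum.inr (Sum.inl b))) 0 = 0) ∧
    (∀ a b, lcoeff (Atil (Sum.inr (Sum.inr a)) (Sum.inr (Sum.inl b))) (-1) = 0) ∧
    (∀ a b, lcoeff (Atil (Sum.inr (Sum.inr a)) (Sum.inr (Sum.inr b))) 0 = 0) := by
  have h1 : R011⁻¹ * R011 = 1 := Matrix.nonsing_inv_mul _ hR011
  have h2 : R022⁻¹ * R022 = 1 := Matrix.nonsing_inv_mul _ hR022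
  have h3 : R033⁻¹ * R033 = 1 := Matrix.nonsing_inv_mul _ hR033
  have e1 : (1:ℤ) + -1 = 0 := by decide
  have e2 : (1:ℤ) + -2 = -1 := by decide
  have e3 : (-1:ℤ) + 1 = 0 := by decide
  have e4 : (-2:ℤ) + 1 = -1 := by decide
  have e5 : (-1:ℤ) + -1 = -2 := by decide
  intro Aε Rε Atil
  have hAe : Aε = connMat A011 A111 A112 Am121 A021 A121 A022 A122 A123
      Am231 Am131 A031 A131 Am132 A032 A132 A033 A133 := rfl
  have hRe : Rε = blk3 (lmat 0 R011) 0 0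
      (lmat (-1) Rm121) (lmat 0 R022) 0
      (lmat (-2) Rm231) (lmat (-1) Rm132) (lmat 0 R033) := rfl
  have g21 : (-(R022⁻¹ * Rm121 * R011⁻¹)) * R011 + R022⁻¹ * Rm121 = 0 := by
    rw [Matrix.neg_mul, Matrix.mul_assoc, h1, Matrix.mul_one, neg_add_cancel]
  have g32 : (-(R033⁻¹ * Rm132 * R022⁻¹)) * R022 + R033⁻¹ * Rm132 = 0 := by
    rw [Matrix.neg_mul, Matrix.mul_assoc, h2, Matrix.mul_one, neg_add_cancel]
  have g31 : (R033⁻¹ * Rm132 * R022⁻¹ * Rm121 * R011⁻¹ - R033⁻¹ * Rm231 * R011⁻¹) * R011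
      + (-(R033⁻¹ * Rm132 * R022⁻¹)) * Rm121 + R033⁻¹ * Rm231 = 0 := by
    rw [Matrix.sub_mul, Matrix.mul_assoc (R033⁻¹ * Rm132 * R022⁻¹ * Rm121), h1, Matrix.mul_one,
      Matrix.mul_assoc (R033⁻¹ * Rm231), h1, Matrix.mul_one, Matrix.neg_mul]
    abel
  have c22 : (-(R022⁻¹ * Rm121 * R011⁻¹)) * (A112 * R022)
      + R022⁻¹ * (Rm121 * R011⁻¹ * A112 * R022) = 0 := by
    simp only [Matrix.neg_mul, Matrix.mul_assoc]
    abel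
  have c33 : (-(R033⁻¹ * Rm132 * R022⁻¹)) * (A123 * R033)
      + R033⁻¹ * (Rm132 * R022⁻¹ * A123 * R033) = 0 := by
    simp only [Matrix.neg_mul, Matrix.mul_assoc]
    abel
  have c32 : (R033⁻¹ * Rm132 * R022⁻¹ * Rm121 * R011⁻¹ - R033⁻¹ * Rm231 * R011⁻¹) * (A112 * R022)
      + (-(R033⁻¹ * Rm132 * R022⁻¹)) * (Rm121 * R011⁻¹ * A112 * R022)
      + R033⁻¹ * (Rm231 * R011⁻¹ * A112 * R022) = 0 := by
    simp only [Matrix.sub_mul, Matrix.neg_mul, Matrix.mul_assoc]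
    abel
  have hleft : blk3 (lmat 0 R011⁻¹) 0 0
      (lmat (-1) (-(R022⁻¹ * Rm121 * R011⁻¹))) (lmat 0 R022⁻¹) 0
      (lmat (-2) (R033⁻¹ * Rm132 * R022⁻¹ * Rm121 * R011⁻¹ - R033⁻¹ * Rm231 * R011⁻¹))
      (lmat (-1) (-(R033⁻¹ * Rm132 * R022⁻¹))) (lmat 0 R033⁻¹) * Rε = 1 := by
    rw [hRe, blk3_mul, ← blk3_one]
    refine blk3_congr _ _ _ _ _ _ _ _ _ _ _ _ _ _ _ _ _ _ ?_ ?_ ?_ ?_ ?_ ?_ ?_ ?_ ?_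
    · rw [Matrix.zero_mul, Matrix.zero_mul, add_zero, add_zero, lmat_mul, add_zero, h1, lmat_one]
    · simp [lmat_zero]
    · simp [lmat_zero]
    · rw [Matrix.zero_mul, add_zero, lmat_mul, lmat_mul, add_zero, zero_add,
        ← lmat_add, g21, lmat_zero]
    · rw [Matrix.mul_zero, Matrix.zero_mul, zero_add, add_zero, lmat_mul, add_zero, h2, lmat_one]
    · simp [lmat_zero]
    · rw [lmat_mul, lmat_mul, lmat_mul, add_zero, e5, zero_add, ← lmat_add, ← lmat_add,
        g31, lmat_zero]
    · rw [Matrix.mul_zero, zero_add, lmat_mul, lmat_mul, add_zero, zero_add,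
        ← lmat_add, g32, lmat_zero]
    · rw [Matrix.mul_zero, Matrix.mul_zero, zero_add, zero_add, lmat_mul, add_zero, h3, lmat_one]
  have hinv : Rε⁻¹ = blk3 (lmat 0 R011⁻¹) 0 0
      (lmat (-1) (-(R022⁻¹ * Rm121 * R011⁻¹))) (lmat 0 R022⁻¹) 0
      (lmat (-2) (R033⁻¹ * Rm132 * R022⁻¹ * Rm121 * R011⁻¹ - R033⁻¹ * Rm231 * R011⁻¹))
      (lmat (-1) (-(R033⁻¹ * Rm132 * R022⁻¹))) (lmat 0 R033⁻¹) :=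
    Matrix.inv_eq_left_inv hleft
  have hM : Aε * Rε - Rε.map (lder δ hδ0) =
      blk3 (lmat 1 (A111 * R011)) (lmat 1 (A112 * R022)) 0
        (lmat 0 (A021 * R011 + A122 * Rm121) + lmat 1 (A121 * R011))
        (lmat 0 (Rm121 * R011⁻¹ * A112 * R022) + lmat 1 (A122 * R022))
        (lmat 1 (A123 * R033))
        (lmat (-1) (Am131 * R011 + A032 * Rm121 + A133 * Rm231)
          + lmat 0 (A031 * R011 + A132 * Rm121) + lmat 1 (A131 * R011))
        (lmat (-1) (Rm231 * R011⁻¹ * A112 * R022) + lmat 0 (A032 * R022 + A133 * Rm132)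
          + lmat 1 (A132 * R022))
        (lmat 0 (Rm132 * R022⁻¹ * A123 * R033) + lmat 1 (A133 * R033)) := by
    rw [hAe, hRe]
    simp only [connMat]
    rw [blk3_map, blk3_mul, blk3_sub]
    simp only [lmat_map_lder, map_zero_lder]
    refine blk3_congr _ _ _ _ _ _ _ _ _ _ _ _ _ _ _ _ _ _ ?_ ?_ ?_ ?_ ?_ ?_ ?_ ?_ ?_ <;>
      simp only [Matrix.add_mul, Matrix.zero_mul, Matrix.mul_zero, add_zero, zero_add,
        lmat_mul, e1, e2, e3, e4, e5, heq1, heq2, heq3, heq4, heq5, heq6,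
        lmat_add, lmat_sub, lmat_zero, sub_zero] <;>
      try abel
  have hAtilEq : Atil = blk3
      (lmat 1 (R011⁻¹ * (A111 * R011)))
      (lmat 1 (R011⁻¹ * (A112 * R022)))
      0
      (lmat 0 ((-(R022⁻¹ * Rm121 * R011⁻¹)) * (A111 * R011))
        + lmat 0 (R022⁻¹ * (A021 * R011 + A122 * Rm121)) + lmat 1 (R022⁻¹ * (A121 * R011)))
      (lmat 0 ((-(R022⁻¹ * Rm121 * R011⁻¹)) * (A112 * R022))
        + lmat 0 (R022⁻¹ * (Rm121 * R011⁻¹ * A112 * R022)) + lmat 1 (R022⁻¹ * (A122 * R022)))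
      (lmat 1 (R022⁻¹ * (A123 * R033)))
      (lmat (-1) ((R033⁻¹ * Rm132 * R022⁻¹ * Rm121 * R011⁻¹ - R033⁻¹ * Rm231 * R011⁻¹)
          * (A111 * R011))
        + lmat (-1) ((-(R033⁻¹ * Rm132 * R022⁻¹)) * (A021 * R011 + A122 * Rm121))
        + lmat 0 ((-(R033⁻¹ * Rm132 * R022⁻¹)) * (A121 * R011))
        + lmat (-1) (R033⁻¹ * (Am131 * R011 + A032 * Rm121 + A133 * Rm231))
        + lmat 0 (R033⁻¹ * (A031 * R011 + A132 * Rm121)) + lmat 1 (R033⁻¹ * (A131 * R011)))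
      (lmat (-1) ((R033⁻¹ * Rm132 * R022⁻¹ * Rm121 * R011⁻¹ - R033⁻¹ * Rm231 * R011⁻¹)
          * (A112 * R022))
        + lmat (-1) ((-(R033⁻¹ * Rm132 * R022⁻¹)) * (Rm121 * R011⁻¹ * A112 * R022))
        + lmat 0 ((-(R033⁻¹ * Rm132 * R022⁻¹)) * (A122 * R022))
        + lmat (-1) (R033⁻¹ * (Rm231 * R011⁻¹ * A112 * R022))
        + lmat 0 (R033⁻¹ * (A032 * R022 + A133 * Rm132)) + lmat 1 (R033⁻¹ * (A132 * R022)))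
      (lmat 0 ((-(R033⁻¹ * Rm132 * R022⁻¹)) * (A123 * R033))
        + lmat 0 (R033⁻¹ * (Rm132 * R022⁻¹ * A123 * R033))
        + lmat 1 (R033⁻¹ * (A133 * R033))) := by
    show gaugeTransform δ hδ0 Aε Rε = _
    rw [gaugeTransform, hinv, Matrix.mul_assoc, ← Matrix.mul_sub, hM, blk3_mul]
    refine blk3_congr _ _ _ _ _ _ _ _ _ _ _ _ _ _ _ _ _ _ ?_ ?_ ?_ ?_ ?_ ?_ ?_ ?_ ?_ <;>
      simp only [Matrix.mul_add, Matrix.zero_mul, Matrix.mul_zero, add_zero, zero_add,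
        lmat_mul, e1, e2, e3, e4, e5, add_zero, zero_add] <;>
      try abel
  refine ⟨?_, ?_, ?_, ?_, ?_, ?_⟩ <;> intro a b <;> rw [hAtilEq]
  · simp [blk3, lcoeff_add, lcoeff_lmat]
  · simp [blk3, lcoeff_add, lcoeff_lmat]
  · simp [blk3, lcoeff_add, lcoeff_lmat]
  · have hc := congrFun (congrFun c22 a) b
    simp only [Matrix.add_apply, Matrix.zero_apply] at hc
    simpa [blk3, lcoeff_add, lcoeff_lmat] using hc
  · have hc := congrFun (congrFun c32 a) b
    simp only [Matrix.add_apply, Matrix.zero_apply] at hc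
    simpa [blk3, lcoeff_add, lcoeff_lmat] using hc
  · have hc := congrFun (congrFun c33 a) b
    simp only [Matrix.add_apply, Matrix.zero_apply] at hc
    simpa [blk3, lcoeff_add, lcoeff_lmat] using hc
end
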